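/- arXiv:1709.06036 — 12 statements merged into one kernel-verified Lean document; each statement's English description precedes it below -/
import Mathlib

section
/- Let r, s ≥ 1 be integers and t = min(r, s). Let M be an r×s matrix with entries in {−1, 0, 1} and u ∈ {−1, 0, 1}^r. Let F be a field of characteristic 0, and view the entries of M and u as elements of F via the canonical ring map from ℤ. If the linear system M·x = u has a solution x ∈ F^s, then there exist integers a_1, …, a_s and b with b ≠ 0, |b| ≤ t!, and |a_i| ≤ t! for every i ∈ [s], such that the rational vector x ∈ ℚ^s given by x_i = a_i/b satisfies M·x = u over ℚ. -/
/-!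
Solvability descends from `F` to `ℚ`: a certificate of unsolvability over `ℚ` (a row vector `w`
with `w M = 0` and `w ⬝ u ≠ 0`) would remain one over `F`. Over `ℚ`, a solution can be supported
on a maximal independent set of `d` columns, and `d` independent rows of those columns form a
nonsingular `d × d` submatrix `S`, with `d ≤ min r s`. Cramer's rule then writes the solution as
`cramer S c / det S`; numerator and denominator are determinants of `d × d` matrices with entries
in `{-1, 0, 1}`, hence at most `d!` in absolute value.
-/

open Function
open scoped Nat

namespace Matrix

section Field

variable {K : Type*} [Field K] {m n : Type*} [Fintype n]

theorem exists_vecMul_eq_zero_dotProduct_ne_zero [Fintype m] [DecidableEq m] [DecidableEq n]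
    (A : Matrix m n K) {b : m → K} (hb : ∀ x, A *ᵥ x ≠ b) :
    ∃ w : m → K, w ᵥ* A = 0 ∧ w ⬝ᵥ b ≠ 0 := by
  have hb_range : b ∉ LinearMap.range A.mulVecLin := by
    rintro ⟨x, hx⟩
    exact hb x hx
  obtain ⟨f, hfb, hf⟩ := Submodule.exists_dual_map_eq_bot_of_notMem hb_range inferInstance
  set w : m → K := fun i => f (Pi.single i 1)
  have hf_eq : ∀ v, f v = w ⬝ᵥ v := by
    intro v
    conv_lhs => rw [pi_eq_sum_univ' v]
    simp [w, dotProduct, mul_comm]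
  refine ⟨w, ?_, by rwa [← hf_eq]⟩
  ext j
  have hcol : f (A *ᵥ Pi.single j 1) = 0 := by
    rw [← Submodule.mem_bot K, ← hf]
    exact Submodule.mem_map_of_mem ⟨_, rfl⟩
  rwa [hf_eq, dotProduct_mulVec, dotProduct_single_one] at hcol

theorem exists_mulVec_eq_of_exists_map_mulVec_eq [Fintype m] {L : Type*} [Field L] (f : K →+* L)
    (A : Matrix m n K) (b : m → K) (h : ∃ y : n → L, A.map f *ᵥ y = f ∘ b) :
    ∃ x, A *ᵥ x = b := by
  classical
  by_contra! hb
  obtain ⟨w, hwA, hwb⟩ := A.exists_vecMul_eq_zero_dotProduct_ne_zero hb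
  obtain ⟨y, hy⟩ := h
  apply hwb
  apply f.injective
  calc f (w ⬝ᵥ b) = (f ∘ w) ⬝ᵥ (A.map f *ᵥ y) := by
        rw [hy]
        simp [dotProduct, map_sum]
    _ = f ∘ (w ᵥ* A) ⬝ᵥ y := by
        rw [dotProduct_mulVec]
        congr 1
        ext j
        exact (f.map_vecMul A w j).symm
    _ = f 0 := by simp [hwA]

theorem exists_linearIndependent_col_submatrix_mulVec_eq (A : Matrix m n K) (x : n → K) :
    ∃ (d : ℕ) (cols : Fin d → n) (z : Fin d → K), Injective cols ∧
      LinearIndependent K (A.submatrix id cols).col ∧ A.submatrix id cols *ᵥ z = A *ᵥ x := by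
  obtain ⟨κ, a, ha, hspan, hli⟩ := exists_linearIndependent' K A.col
  have : Finite κ := Finite.of_injective a ha
  cases nonempty_fintype κ
  let e := Fintype.equivFin κ
  have hmem : A *ᵥ x ∈ Submodule.span K (Set.range (A.col ∘ a ∘ e.symm)) := by
    rw [← Function.comp_assoc, EquivLike.range_comp, hspan, ← range_mulVecLin]
    exact ⟨x, rfl⟩
  obtain ⟨z, hz⟩ := (Submodule.mem_span_range_iff_exists_fun K).mp hmem
  refine ⟨_, a ∘ e.symm, z, ha.comp e.symm.injective, hli.comp _ e.symm.injective, ?_⟩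
  rw [← hz]
  ext i
  simp [mulVec, dotProduct, Finset.sum_apply, mul_comm]

theorem exists_isUnit_submatrix_of_linearIndependent_col [Fintype m] {k : Type*} [Fintype k]
    [DecidableEq k] {B : Matrix m k K} (hB : LinearIndependent K B.col) :
    ∃ rows : k → m, Injective rows ∧ IsUnit (B.submatrix rows id) := by
  obtain ⟨ι, a, ha, hspan, hli⟩ := exists_linearIndependent' K B.row
  have : Finite ι := Finite.of_injective a ha
  cases nonempty_fintype ι
  have hcard : Fintype.card ι = Fintype.card k := by
    rw [← finrank_span_eq_card hli, hspan, ← rank_eq_finrank_span_row, rank_eq_finrank_span_cols,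
      finrank_span_eq_card hB]
  let e := Fintype.equivOfCardEq hcard
  refine ⟨a ∘ e.symm, ha.comp e.symm.injective, ?_⟩
  rw [← linearIndependent_rows_iff_isUnit]
  exact hli.comp _ e.symm.injective

end Field

theorem mulVec_extend_zero {R : Type*} [CommSemiring R] {m n d : Type*} [Fintype n] [Fintype d]
    (A : Matrix m n R) {cols : d → n} (hcols : Injective cols) (z : d → R) :
    A *ᵥ extend cols z 0 = A.submatrix id cols *ᵥ z := by
  ext i
  refine (Fintype.sum_of_injective cols hcols _ _ (fun j hj => ?_) fun k => ?_).symm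
  · simp [extend_apply' _ _ _ (by simpa using hj)]
  · simp [hcols.extend_apply]

section Cramer

variable {k : Type*} [Fintype k] [DecidableEq k]

theorem cramer_mulVec {R : Type*} [CommRing R] (A : Matrix k k R) (v : k → R) :
    cramer A (A *ᵥ v) = A.det • v := by
  rw [cramer_eq_adjugate_mulVec, mulVec_mulVec, adjugate_mul, smul_mulVec, one_mulVec]

theorem intCast_cramer {R : Type*} [CommRing R] (A : Matrix k k ℤ) (c : k → ℤ) (i : k) :
    (cramer A c i : R) = cramer (A.map (Int.cast : ℤ → R)) (fun j => (c j : R)) i := by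
  rw [cramer_eq_adjugate_mulVec, cramer_eq_adjugate_mulVec]
  have hadj := (Int.castRingHom R).map_adjugate A
  simp only [RingHom.mapMatrix_apply] at hadj
  exact ((Int.castRingHom R).map_mulVec A.adjugate c i).trans (by rw [hadj]; rfl)

theorem eq_cramer_div_det {S : Matrix k k ℤ} (hS : S.det ≠ 0) {c : k → ℤ} {z : k → ℚ}
    (h : S.map (Int.cast : ℤ → ℚ) *ᵥ z = fun i => (c i : ℚ)) (i : k) :
    z i = cramer S c i / S.det := by
  rw [eq_div_iff (by exact_mod_cast hS), intCast_cramer, ← h, cramer_mulVec, Int.cast_det,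
    Pi.smul_apply, smul_eq_mul, mul_comm]

theorem abs_det_le_factorial {S : Matrix k k ℤ} (hS : ∀ i j, |S i j| ≤ 1) :
    |S.det| ≤ (Fintype.card k)! := by
  simpa using det_le (abv := AbsoluteValue.abs) hS

theorem abs_cramer_le_factorial {S : Matrix k k ℤ} (hS : ∀ i j, |S i j| ≤ 1) {c : k → ℤ}
    (hc : ∀ i, |c i| ≤ 1) (i : k) : |cramer S c i| ≤ (Fintype.card k)! := by
  rw [cramer_apply]
  refine abs_det_le_factorial fun p q => ?_
  rw [updateCol_apply]
  split_ifs
  exacts [hc p, hS p q]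

end Cramer

theorem exists_int_div_solution_of_abs_le_one {m n : Type*} [Fintype m] [Fintype n]
    {M : Matrix m n ℤ} {u : m → ℤ} (hM : ∀ i j, |M i j| ≤ 1) (hu : ∀ i, |u i| ≤ 1)
    {x : n → ℚ} (hx : M.map (Int.cast : ℤ → ℚ) *ᵥ x = fun i => (u i : ℚ)) :
    ∃ (a : n → ℤ) (b : ℤ), b ≠ 0 ∧ |b| ≤ (min (Fintype.card m) (Fintype.card n))! ∧
      (∀ j, |a j| ≤ (min (Fintype.card m) (Fintype.card n))!) ∧
      M.map (Int.cast : ℤ → ℚ) *ᵥ (fun j => (a j : ℚ) / b) = fun i => (u i : ℚ) := by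
  set A := M.map (Int.cast : ℤ → ℚ)
  obtain ⟨d, cols, z, hcols, hli, hz⟩ := A.exists_linearIndependent_col_submatrix_mulVec_eq x
  obtain ⟨rows, hrows, hunit⟩ := exists_isUnit_submatrix_of_linearIndependent_col hli
  set S := M.submatrix rows cols
  have hdet : S.det ≠ 0 := by
    have : ((S.det : ℤ) : ℚ) ≠ 0 := by
      rw [Int.cast_det]
      exact (isUnit_iff_isUnit_det _).mp hunit |>.ne_zero
    exact_mod_cast this
  have hSz : S.map (Int.cast : ℤ → ℚ) *ᵥ z = fun i => (u (rows i) : ℚ) :=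
    funext fun i => congrFun (hz.trans hx) (rows i)
  have hd : ((Fintype.card (Fin d))! : ℤ) ≤ (min (Fintype.card m) (Fintype.card n))! := by
    have hdm := Fintype.card_le_of_injective rows hrows
    have hdn := Fintype.card_le_of_injective cols hcols
    exact_mod_cast Nat.factorial_le (le_min hdm hdn)
  have hS1 : ∀ i j, |S i j| ≤ 1 := fun i j => hM _ _
  refine ⟨extend cols (cramer S (u ∘ rows)) 0, S.det, hdet, ?_, fun j => ?_, ?_⟩
  · exact (abs_det_le_factorial hS1).trans hd
  · by_cases hj : ∃ k, cols k = j
    · obtain ⟨k, rfl⟩ := hj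
      rw [hcols.extend_apply]
      exact (abs_cramer_le_factorial hS1 (fun i => hu (rows i)) k).trans hd
    · rw [extend_apply' _ _ _ hj]
      simp
  · have hsol : (fun j => ((extend cols (cramer S (u ∘ rows)) 0 j : ℤ) : ℚ) / S.det) = extend cols z 0 := by
      ext j
      rw [apply_extend (fun q : ℤ => (q : ℚ) / S.det)]
      congr 1
      · ext k
        exact (eq_cramer_div_det hdet hSz k).symm
      · ext
        simp
    rw [hsol, mulVec_extend_zero _ hcols, hz, hx]

end Matrix

theorem stmt0_general (r s : ℕ)
    (M : Matrix (Fin r) (Fin s) ℤ) (u : Fin r → ℤ)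
    (hM : ∀ i j, M i j ∈ ({-1, 0, 1} : Set ℤ))
    (hu : ∀ i, u i ∈ ({-1, 0, 1} : Set ℤ))
    (F : Type*) [Field F] [CharZero F]
    (hsol : ∃ x : Fin s → F, ∀ i, ∑ j, (M i j : F) * x j = (u i : F)) :
    ∃ (a : Fin s → ℤ) (b : ℤ), b ≠ 0 ∧ |b| ≤ ((min r s).factorial : ℤ) ∧
      (∀ j, |a j| ≤ ((min r s).factorial : ℤ)) ∧
      ∀ i, ∑ j, (M i j : ℚ) * ((a j : ℚ) / (b : ℚ)) = (u i : ℚ) := by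
  have abs_le_one : ∀ z ∈ ({-1, 0, 1} : Set ℤ), |z| ≤ 1 := by
    rintro z (rfl | rfl | rfl) <;> simp
  obtain ⟨x, hx⟩ := (M.map (Int.cast : ℤ → ℚ)).exists_mulVec_eq_of_exists_map_mulVec_eq
    (Rat.castHom F) (fun i => (u i : ℚ)) <| by
      obtain ⟨y, hy⟩ := hsol
      exact ⟨y, funext fun i => by simpa [Matrix.mulVec, dotProduct] using hy i⟩
  obtain ⟨a, b, hb, hb_le, ha_le, hab⟩ := Matrix.exists_int_div_solution_of_abs_le_one
    (fun i j => abs_le_one _ (hM i j)) (fun i => abs_le_one _ (hu i)) hx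
  simp only [Fintype.card_fin] at hb_le ha_le
  exact ⟨a, b, hb, hb_le, ha_le, fun i => congrFun hab i⟩

/-- Lemma on small solutions of {-1,0,1} linear systems, characteristic 0 case.
If a linear system `M·x = u` with entries in `{-1,0,1}` has a solution over a field `F` of
characteristic `0`, then it has a rational solution `x_i = a_i / b` with
`|a_i|, |b| ≤ t!` where `t = min r s`. -/
theorem stmt0 (r s : ℕ) (hr : 1 ≤ r) (hs : 1 ≤ s)
    (M : Matrix (Fin r) (Fin s) ℤ) (u : Fin r → ℤ)
    (hM : ∀ i j, M i j ∈ ({-1, 0, 1} : Set ℤ))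
    (hu : ∀ i, u i ∈ ({-1, 0, 1} : Set ℤ))
    (F : Type*) [Field F] [CharZero F]
    (hsol : ∃ x : Fin s → F, ∀ i, ∑ j, (M i j : F) * x j = (u i : F)) :
    ∃ (a : Fin s → ℤ) (b : ℤ), b ≠ 0 ∧ |b| ≤ ((min r s).factorial : ℤ) ∧
      (∀ j, |a j| ≤ ((min r s).factorial : ℤ)) ∧
      ∀ i, ∑ j, (M i j : ℚ) * ((a j : ℚ) / (b : ℚ)) = (u i : ℚ) :=
  stmt0_general r s M u hM hu F hsol
end

section
/- Let n, s, t ≥ 1 be integers with s ≤ n, and let F be a field of characteristic 0. Let S = { x ∈ {−1, 1}^n : |Σ_{j=1}^n x_j| ≤ n/s }. Suppose there exist vectors x^1, …, x^t ∈ S and coefficients c_1, …, c_t ∈ F such that the all-ones vector 1^n equals Σ_{i=1}^t c_i · x^i in F^n, where entries of the x^i are viewed in F via the canonical embedding of ℤ. Then (t+1)! ≥ s. -/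
/-!
A `ℚ`-linear functional `F → ℚ` sending `1` to `1` turns the relation into one over `ℚ`.
Over `ℚ`, pass to a linearly independent subfamily of the `x^i`, which still spans `1`; it has
an invertible square `±1` submatrix, so by Cramer's rule every coefficient is a quotient of
integer determinants, the denominator nonzero and the numerator a `k × k` determinant with
entries of absolute value at most `1`, hence `|a_i| ≤ k! ≤ t!`. Summing all coordinates of
`1^n = ∑ a_i x^i` gives `n ≤ t · t! · n / s`, so `s ≤ t · t! ≤ (t + 1)!`.
-/

open Matrix Module Nat

theorem Matrix.exists_isUnit_submatrix_of_linearIndependent_row {K κ m : Type*} [Field K]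
    [Fintype κ] [DecidableEq κ] [Fintype m] (M : Matrix κ m K) (hM : LinearIndependent K M.row) :
    ∃ g : κ → m, IsUnit (M.submatrix id g) := by
  have hcols : Submodule.span K (Set.range M.col) = ⊤ := Submodule.eq_top_of_finrank_eq <| by
    rw [← rank_eq_finrank_span_cols, hM.rank_matrix, finrank_fintype_fun_eq_card]
  obtain ⟨κ', c, -, hc_span, hc_li⟩ := exists_linearIndependent' K M.col
  have := hc_li.finite
  have := Fintype.ofFinite κ'
  have hcard : Fintype.card κ = Fintype.card κ' := by
    rw [linearIndependent_iff_card_eq_finrank_span.mp hc_li, Set.finrank, hc_span, hcols,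
      finrank_top, finrank_fintype_fun_eq_card]
  let e := Fintype.equivOfCardEq hcard
  refine ⟨c ∘ e, linearIndependent_cols_iff_isUnit.mp ?_⟩
  exact hc_li.comp e e.injective

theorem Matrix.abs_le_factorial_of_intCast_mulVec_eq_one {κ : Type*} [Fintype κ] [DecidableEq κ]
    (B : Matrix κ κ ℤ) (hB : B.det ≠ 0) (hle : ∀ i j, |B i j| ≤ 1) {a : κ → ℚ}
    (ha : B.map (Int.cast : ℤ → ℚ) *ᵥ a = 1) (k : κ) :
    |a k| ≤ (Fintype.card κ)! := by
  set Bq := B.map (Int.cast : ℤ → ℚ)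
  have hcramer : (B.det : ℚ) * a k = ((B.updateCol k 1).det : ℚ) := by
    calc (B.det : ℚ) * a k = ((Bq.adjugate * Bq) *ᵥ a) k := by
          simp [adjugate_mul, Bq, Int.cast_det, smul_mulVec]
      _ = Bq.cramer 1 k := by rw [← mulVec_mulVec, ha, cramer_eq_adjugate_mulVec]
      _ = ((B.updateCol k 1).det : ℚ) := by
          rw [cramer_apply, Int.cast_det]
          congr 1
          ext i j
          by_cases hj : j = k <;> simp [hj, Bq]
  have hnum : |(B.updateCol k 1).det| ≤ (Fintype.card κ)! := by
    simpa using det_le (A := B.updateCol k 1) (abv := AbsoluteValue.abs) (x := 1) fun i j => by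
      by_cases hj : j = k <;> simp [hj, hle]
  have hden : (1 : ℚ) ≤ |(B.det : ℚ)| := by exact_mod_cast Int.one_le_abs hB
  calc |a k| ≤ |(B.det : ℚ)| * |a k| := le_mul_of_one_le_left (abs_nonneg _) hden
    _ = |((B.updateCol k 1).det : ℚ)| := by rw [← abs_mul, hcramer]
    _ ≤ (Fintype.card κ)! := by exact_mod_cast hnum

theorem abs_le_factorial_of_sum_smul_eq_one {κ m : Type*} [Fintype κ] [DecidableEq κ] [Fintype m]
    (w : κ → m → ℤ) (hw : ∀ k j, |w k j| ≤ 1)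
    (hli : LinearIndependent ℚ fun k j => (w k j : ℚ)) {a : κ → ℚ}
    (ha : ∑ k, a k • (fun j => (w k j : ℚ)) = 1) (k : κ) :
    |a k| ≤ (Fintype.card κ)! := by
  obtain ⟨g, hg⟩ := exists_isUnit_submatrix_of_linearIndependent_row
    (Matrix.of fun k j => (w k j : ℚ)) hli
  let B : Matrix κ κ ℤ := Matrix.of fun l k => w k (g l)
  have hBq : B.map (Int.cast : ℤ → ℚ) = ((Matrix.of fun k j => (w k j : ℚ)).submatrix id g)ᵀ := rfl
  refine abs_le_factorial_of_intCast_mulVec_eq_one B ?_ (fun l k => hw k (g l)) ?_ k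
  · have := (isUnit_iff_isUnit_det _).mp hg
    rw [← det_transpose, ← hBq, ← Int.cast_det] at this
    exact_mod_cast this.ne_zero
  · funext l
    simpa [B, mulVec, dotProduct, mul_comm] using congrFun ha (g l)

theorem exists_sum_smul_eq_one_abs_le_factorial {ι m : Type*} [Fintype ι] [Fintype m]
    (u : ι → m → ℤ) (hu : ∀ i j, |u i j| ≤ 1)
    (h1 : (1 : m → ℚ) ∈ Submodule.span ℚ (Set.range fun i j => (u i j : ℚ))) :
    ∃ a : ι → ℚ, ∑ i, a i • (fun j => (u i j : ℚ)) = 1 ∧ ∀ i, |a i| ≤ (Fintype.card ι)! := by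
  classical
  obtain ⟨κ, e, he, hspan, hli⟩ := exists_linearIndependent' ℚ fun i j => (u i j : ℚ)
  have := Finite.of_injective e he
  have := Fintype.ofFinite κ
  rw [← hspan] at h1
  obtain ⟨b, hb⟩ := (Submodule.mem_span_range_iff_exists_fun ℚ).mp h1
  have hb_le k : |b k| ≤ (Fintype.card ι)! :=
    (abs_le_factorial_of_sum_smul_eq_one (fun k => u (e k)) (fun k => hu (e k)) hli hb k).trans
      (by exact_mod_cast factorial_le (Fintype.card_le_of_injective e he))
  refine ⟨Function.extend e b 0, ?_, fun i => ?_⟩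
  · rw [← hb]
    refine (Fintype.sum_of_injective e he _ _ (fun i hi => ?_) fun k => ?_).symm
    · simp [Function.extend_apply' _ _ _ hi]
    · simp [he.extend_apply]
  · by_cases hi : ∃ k, e k = i
    · obtain ⟨k, rfl⟩ := hi
      simpa [he.extend_apply] using hb_le k
    · simp [Function.extend_apply' _ _ _ hi]

theorem card_le_mul_of_sum_smul_eq_one {ι m : Type*} [Fintype ι] [Fintype m]
    (v : ι → m → ℚ) (a : ι → ℚ) (h : ∑ i, a i • v i = 1) {A B : ℚ}
    (ha : ∀ i, |a i| ≤ A) (hv : ∀ i, |∑ j, v i j| ≤ B) :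
    (Fintype.card m : ℚ) ≤ Fintype.card ι * (A * B) := by
  calc (Fintype.card m : ℚ) = ∑ j, (1 : m → ℚ) j := by simp
    _ = ∑ j, ∑ i, a i * v i j := by simp_rw [← h, Finset.sum_apply, Pi.smul_apply, smul_eq_mul]
    _ = ∑ i, a i * ∑ j, v i j := by rw [Finset.sum_comm]; simp [Finset.mul_sum]
    _ ≤ ∑ i, |a i| * |∑ j, v i j| :=
        Finset.sum_le_sum fun i _ => (le_abs_self _).trans (abs_mul _ _).le
    _ ≤ ∑ _i : ι, A * B := Finset.sum_le_sum fun i _ =>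
        mul_le_mul (ha i) (hv i) (abs_nonneg _) ((abs_nonneg _).trans (ha i))
    _ = Fintype.card ι * (A * B) := by simp

theorem stmt2_general (n s t : ℕ) (hsn : s ≤ n)
    (F : Type*) [Field F] [CharZero F]
    (x : Fin t → Fin n → ℤ)
    (hx : ∀ i j, x i j = 1 ∨ x i j = -1)
    (hbal : ∀ i, |((∑ j, x i j : ℤ) : ℚ)| ≤ (n : ℚ) / (s : ℚ))
    (c : Fin t → F)
    (hspan : ∀ j, (1 : F) = ∑ i, c i * ((x i j : ℤ) : F)) :
    s ≤ (t + 1).factorial := by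
  obtain ⟨f, hf1⟩ := Projective.exists_dual_eq_one ℚ (one_ne_zero : (1 : F) ≠ 0)
  have hspanQ : ∑ i, f (c i) • (fun j => (x i j : ℚ)) = 1 := by
    funext j
    have hterm i : f (c i * (x i j : F)) = f (c i) * x i j := by
      rw [mul_comm, ← zsmul_eq_mul, map_zsmul, zsmul_eq_mul, mul_comm]
    simpa [hf1, hterm] using (congrArg f (hspan j)).symm
  obtain ⟨a, ha, ha_le⟩ := exists_sum_smul_eq_one_abs_le_factorial x
    (fun i j => by rcases hx i j with h | h <;> simp [h])
    ((Submodule.mem_span_range_iff_exists_fun ℚ).mpr ⟨_, hspanQ⟩)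
  have hcount := card_le_mul_of_sum_smul_eq_one _ a ha ha_le (by simpa using hbal)
  rcases s.eq_zero_or_pos with rfl | hs
  · exact Nat.zero_le _
  have hn : (0 : ℚ) < n := by exact_mod_cast hs.trans_le hsn
  simp only [Fintype.card_fin] at hcount
  have hst : (s : ℚ) ≤ t * t ! := by
    rw [mul_div_assoc', mul_div_assoc', le_div_iff₀ (by exact_mod_cast hs)] at hcount
    nlinarith
  calc s ≤ t * t ! := by exact_mod_cast hst
    _ ≤ (t + 1) * t ! := Nat.mul_le_mul_right _ t.le_succ

/-- No small span of balanced ±1 vectors containing the all-ones vector,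
characteristic 0 case. If the all-ones vector is an `F`-linear combination of `t` vectors
in `{-1,1}^n` each with coordinate sum at most `n/s` in absolute value, then `(t+1)! ≥ s`. -/
theorem stmt2 (n s t : ℕ) (hn : 1 ≤ n) (hs : 1 ≤ s) (ht : 1 ≤ t) (hsn : s ≤ n)
    (F : Type*) [Field F] [CharZero F]
    (x : Fin t → Fin n → ℤ)
    (hx : ∀ i j, x i j = 1 ∨ x i j = -1)
    (hbal : ∀ i, |((∑ j, x i j : ℤ) : ℚ)| ≤ (n : ℚ) / (s : ℚ))
    (c : Fin t → F)
    (hspan : ∀ j, (1 : F) = ∑ i, c i * ((x i j : ℤ) : F)) :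
    s ≤ (t + 1).factorial :=
  stmt2_general n s t hsn F x hx hbal c hspan
end

section
/- Let n, s, t ≥ 1 be integers with s ≤ n, let p be a prime with p ≥ 2n², and let F be a field of characteristic p. Let S = { x ∈ {−1, 1}^n : |Σ_{j=1}^n x_j| ≤ n/s }. Suppose there exist vectors x^1, …, x^t ∈ S and coefficients c_1, …, c_t ∈ F such that the all-ones vector 1^n equals Σ_{i=1}^t c_i · x^i in F^n, where entries of the x^i are viewed in F via the canonical ring map ℤ → F. Then (t+1)! ≥ s. -/
/-!
Let `Z` be the `n × (t+1)` integer matrix with rows `(1, x¹_j, …, xᵗ_j)`; the vector `(-1, c)`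
lies in its kernel over `F`. Pick rows of `Z` forming a basis of its rational row space and a
nonsingular `r × r` minor `B` inside them. Cramer's rule without division attaches to every
column `l` an integer kernel vector of `Z` (zero when `l` is a column of `B`) of ℓ¹-norm at most
`(r+1)!`, and over any ring `det B` times a kernel vector is a combination of these. If
`p ∤ det B`, some of these vectors `α` has `α₀ ≠ 0`, and summing `Z α = 0` over the rows gives
`|α₀| n ≤ (n/s) ∑_{i ≥ 1} |αᵢ|`, so `s ≤ (t+1)!`. Otherwise `s ≤ n < p ≤ |det B| ≤ (t+1)!`.
-/

open Finset Matrix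
open scoped Nat

namespace Matrix

variable {K : Type*} [Field K] {κ m : Type*} [Fintype κ] [DecidableEq κ] [Fintype m]

theorem exists_injective_det_submatrix_ne_zero (N : Matrix κ m K)
    (hN : LinearIndependent K N.row) :
    ∃ I : κ → m, Function.Injective I ∧ (N.submatrix id I).det ≠ 0 := by
  obtain ⟨κ', a, ha, hspan, hli⟩ := exists_linearIndependent' K N.col
  have : Fintype κ' := Fintype.ofInjective a ha
  have hcard : Fintype.card κ = Fintype.card κ' := by
    rw [← finrank_span_eq_card hN, ← rank_eq_finrank_span_row, rank_eq_finrank_span_cols,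
      ← hspan, finrank_span_eq_card hli]
  let e : κ ≃ κ' := Fintype.equivOfCardEq hcard
  refine ⟨a ∘ e, ha.comp e.injective, ?_⟩
  have hcols : LinearIndependent K (N.submatrix id (a ∘ e)).col := hli.comp e e.injective
  exact (isUnit_iff_isUnit_det _).mp (linearIndependent_cols_iff_isUnit.mp hcols) |>.ne_zero

theorem exists_det_submatrix_ne_zero_and_mulVec_eq_zero {ι : Type*} [Fintype ι]
    (M : Matrix ι m K) :
    ∃ (r : ℕ) (J : Fin r → ι) (I : Fin r → m), Function.Injective I ∧
      (M.submatrix J I).det ≠ 0 ∧ ∀ v, M.submatrix J id *ᵥ v = 0 → M *ᵥ v = 0 := by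
  obtain ⟨κ, a, ha, hspan, hli⟩ := exists_linearIndependent' K M.row
  have : Finite κ := Finite.of_injective a ha
  let e := Finite.equivFin κ
  have hrows : LinearIndependent K (M.submatrix (a ∘ e.symm) id).row := hli.comp _ e.symm.injective
  obtain ⟨I, hI, hdet⟩ := exists_injective_det_submatrix_ne_zero _ hrows
  refine ⟨_, a ∘ e.symm, I, hI, hdet, fun v hv => funext fun i => ?_⟩
  have hmem : M.row i ∈ Submodule.span K (Set.range ((M.row ∘ a) ∘ e.symm)) := by
    rw [EquivLike.range_comp, hspan]
    exact Submodule.subset_span ⟨i, rfl⟩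
  obtain ⟨w, hw⟩ := Submodule.mem_span_range_iff_exists_fun K |>.mp hmem
  have hrow : ∀ k, M.row (a (e.symm k)) ⬝ᵥ v = 0 := congrFun hv
  change M.row i ⬝ᵥ v = 0
  rw [← hw, sum_dotProduct]
  simp only [smul_dotProduct, Function.comp_apply, hrow, smul_zero, Finset.sum_const_zero]

section CramerKernel

variable {R : Type*} [CommRing R] {κ m : Type*} [Fintype κ] [DecidableEq κ] [DecidableEq m]
  (N : Matrix κ m R) (I : κ → m)

/-- Cramer's rule for the minor `N.submatrix id I`, cleared of denominators, expresses column `l`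
through the columns `I`; this is the resulting relation among the columns of `N`. -/
def cramerKernelVec (l : m) : m → R :=
  (N.submatrix id I).det • Pi.single l 1 -
    ∑ b, (N.submatrix id I).cramer (N.col l) b • Pi.single (I b) 1

theorem mulVec_cramerKernelVec [Fintype m] (l : m) : N *ᵥ N.cramerKernelVec I l = 0 := by
  have h := mulVec_cramer (N.submatrix id I) (N.col l)
  rw [mulVec_eq_sum] at h
  simp only [cramerKernelVec, mulVec_sub, mulVec_smul, mulVec_sum, mulVec_single_one, ← h,
    op_smul_eq_smul, sub_eq_zero]
  rfl

theorem det_smul_eq_sum_cramerKernelVec [Fintype m] {v : m → R} (hv : N *ᵥ v = 0) :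
    (N.submatrix id I).det • v = ∑ l, v l • N.cramerKernelVec I l := by
  have hβ : ∀ b, ∑ l, v l * (N.submatrix id I).cramer (N.col l) b = 0 := fun b => by
    have := congrFun (congrArg (N.submatrix id I).cramer hv) b
    rw [mulVec_eq_sum, map_sum] at this
    simpa [col] using this
  simp only [cramerKernelVec, smul_sub, Finset.sum_sub_distrib, Finset.smul_sum, smul_smul]
  rw [Finset.sum_comm]
  simp only [← Finset.sum_smul, hβ, zero_smul, Finset.sum_const_zero, sub_zero]
  ext l'
  simp [Finset.sum_apply, Pi.single_apply, mul_comm]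

theorem cramerKernelVec_self (b : κ) : N.cramerKernelVec I (I b) = 0 := by
  have h := cramer_transpose_row_self (N.submatrix id I)ᵀ b
  rw [transpose_transpose, det_transpose] at h
  rw [cramerKernelVec, show N.col (I b) = (N.submatrix id I)ᵀ b from rfl, h]
  simp [Pi.single_apply, ite_smul]

theorem map_cramerKernelVec {S : Type*} [CommRing S] (f : R →+* S) (l : m) :
    f ∘ N.cramerKernelVec I l = (N.map f).cramerKernelVec I l := by
  ext l'
  simp only [Function.comp_apply, cramerKernelVec, Pi.sub_apply, map_sub, Finset.sum_apply,
    map_sum, Pi.smul_apply, smul_eq_mul, map_mul, cramer_apply, RingHom.map_det,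
    RingHom.mapMatrix_apply, map_updateCol, Pi.single_apply, apply_ite f, map_one, map_zero]
  rfl

end CramerKernel

variable {κ m : Type*} [Fintype κ] [DecidableEq κ] [DecidableEq m]

theorem abs_det_le_factorial_s3 {A : Matrix κ κ ℤ} (hA : ∀ i j, |A i j| ≤ 1) :
    |A.det| ≤ (Fintype.card κ)! := by
  simpa using det_le (abv := AbsoluteValue.abs) hA

theorem sum_abs_cramerKernelVec_le [Fintype m] {N : Matrix κ m ℤ} (hN : ∀ i j, |N i j| ≤ 1)
    (I : κ → m) (l : m) :
    ∑ l', |N.cramerKernelVec I l l'| ≤ (Fintype.card κ + 1)! := by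
  set B := N.submatrix id I
  have hβ : ∀ b, |B.cramer (N.col l) b| ≤ (Fintype.card κ)! := fun b => by
    rw [cramer_apply]
    refine abs_det_le_factorial_s3 fun i j => ?_
    rw [updateCol_apply]
    split_ifs <;> exact hN _ _
  calc ∑ l', |N.cramerKernelVec I l l'|
      ≤ ∑ l', (|(B.det • Pi.single l 1 : m → ℤ) l'| +
          ∑ b, |(B.cramer (N.col l) b • Pi.single (I b) 1 : m → ℤ) l'|) := by
        refine sum_le_sum fun l' _ => ?_
        rw [cramerKernelVec, Pi.sub_apply, Finset.sum_apply]
        exact (abs_sub _ _).trans (add_le_add le_rfl (abs_sum_le_sum_abs _ _))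
    _ = |B.det| + ∑ b, |B.cramer (N.col l) b| := by
        rw [sum_add_distrib, sum_comm]
        simp [Pi.single_apply, apply_ite (fun x : ℤ => |x|)]
    _ ≤ (Fintype.card κ)! + ∑ _b : κ, ((Fintype.card κ)! : ℤ) :=
        add_le_add (abs_det_le_factorial_s3 fun i j => hN _ _) (sum_le_sum fun b _ => hβ b)
    _ = (Fintype.card κ + 1)! := by
        rw [sum_const, card_univ, Nat.factorial_succ]
        push_cast
        ring

end Matrix

theorem exists_intCast_eq_zero_or_exists_mulVec_eq_zero {ι m F : Type*} [Fintype ι] [Fintype m]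
    [DecidableEq m] [CommRing F] [NoZeroDivisors F] {M : Matrix ι m ℤ} (hM : ∀ i j, |M i j| ≤ 1)
    {c : m → F} (hc : M.map (Int.cast : ℤ → F) *ᵥ c = 0) {o : m} (hco : c o ≠ 0) :
    (∃ D : ℤ, D ≠ 0 ∧ |D| ≤ (Fintype.card m)! ∧ (D : F) = 0) ∨
      ∃ α : m → ℤ, M *ᵥ α = 0 ∧ α o ≠ 0 ∧ ∑ l, |α l| ≤ (Fintype.card m)! := by
  obtain ⟨r, J, I, hI, hdetQ, hker⟩ :=
    exists_det_submatrix_ne_zero_and_mulVec_eq_zero (M.map (Int.cast : ℤ → ℚ))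
  set N := M.submatrix J id
  set D := (N.submatrix id I).det
  have hcast : ((D : ℤ) : ℚ) = ((M.map (Int.cast : ℤ → ℚ)).submatrix J I).det :=
    RingHom.map_det (Int.castRingHom ℚ) _
  have hD : D ≠ 0 := fun h => hdetQ (by rw [← hcast, h, Int.cast_zero])
  have hrm : r ≤ Fintype.card m := by simpa using Fintype.card_le_of_injective I hI
  by_cases hDF : (D : F) = 0
  · refine .inl ⟨D, hD, (abs_det_le_factorial_s3 fun _ _ => hM _ _).trans ?_, hDF⟩
    simpa using Nat.factorial_le hrm
  have hNc : N.map (Int.cast : ℤ → F) *ᵥ c = 0 := funext fun a => congrFun hc (J a)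
  have key := congrFun (det_smul_eq_sum_cramerKernelVec _ I hNc) o
  have hmap : ∀ l, Int.cast ∘ N.cramerKernelVec I l =
      (N.map (Int.cast : ℤ → F)).cramerKernelVec I l :=
    map_cramerKernelVec N I (Int.castRingHom F)
  simp only [← hmap] at key
  have hdetF : ((D : ℤ) : F) = ((N.map (Int.cast : ℤ → F)).submatrix id I).det :=
    RingHom.map_det (Int.castRingHom F) _
  simp only [← hdetF, Pi.smul_apply, smul_eq_mul, Finset.sum_apply, Function.comp_apply] at key
  obtain ⟨l, -, hl⟩ := Finset.exists_ne_zero_of_sum_ne_zero (key ▸ mul_ne_zero hDF hco)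
  set α := N.cramerKernelVec I l
  have hαo : α o ≠ 0 := fun h => hl (by simp [h])
  have hl_notin : l ∉ Set.range I := by
    rintro ⟨b, rfl⟩
    exact hαo (by simp [α, cramerKernelVec_self])
  refine .inr ⟨α, ?_, hαo, ?_⟩
  · have hNα : (M.map (Int.cast : ℤ → ℚ)).submatrix J id *ᵥ (Int.cast ∘ α) = 0 :=
      funext fun a => by
        have h := ((Int.castRingHom ℚ).map_mulVec N α a).symm
        simp only [α, mulVec_cramerKernelVec, Pi.zero_apply, map_zero] at h
        exact h
    funext i
    simpa [hker _ hNα] using (Int.castRingHom ℚ).map_mulVec M α i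
  · refine (sum_abs_cramerKernelVec_le (fun _ _ => hM _ _) I l).trans ?_
    simpa using Nat.factorial_le (Fintype.card_lt_of_injective_of_notMem I hI hl_notin)

theorem sum_mulVec_transpose_of_cons_one {n t : ℕ} (x : Fin t → Fin n → ℤ)
    (α : Fin (t + 1) → ℤ) :
    ∑ j, ((Matrix.of (Fin.cons 1 x))ᵀ *ᵥ α) j = α 0 * n + ∑ i, α i.succ * ∑ j, x i j := by
  simp [mulVec, dotProduct, Fin.sum_univ_succ, Finset.sum_add_distrib, Finset.mul_sum,
    Finset.sum_comm (γ := Fin n), mul_comm]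

theorem le_sum_abs_of_add_sum_mul_eq_zero {ι : Type*} [Fintype ι] {n s : ℕ} (hn : 0 < n)
    (hs : 0 < s) {S a : ι → ℤ} (hS : ∀ i, |(S i : ℚ)| ≤ n / s) {a₀ : ℤ} (ha₀ : a₀ ≠ 0)
    (h : a₀ * n + ∑ i, a i * S i = 0) :
    (s : ℤ) ≤ ∑ i, |a i| := by
  have h' : (a₀ : ℚ) * n = -∑ i, (a i : ℚ) * S i := by
    exact_mod_cast eq_neg_of_add_eq_zero_left h
  have hT : (n : ℚ) ≤ (∑ i, |(a i : ℚ)|) * (n / s) := calc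
    (n : ℚ) ≤ |(a₀ : ℚ)| * n :=
        le_mul_of_one_le_left (by positivity) (by exact_mod_cast Int.one_le_abs ha₀)
    _ = |∑ i, (a i : ℚ) * S i| := by rw [← Nat.abs_cast, ← abs_mul, h', abs_neg]
    _ ≤ ∑ i, |(a i : ℚ)| * (n / s) := (abs_sum_le_sum_abs _ _).trans <| sum_le_sum fun i _ => by
        rw [abs_mul]
        exact mul_le_mul_of_nonneg_left (hS i) (abs_nonneg _)
    _ = _ := (sum_mul ..).symm
  rw [mul_div_assoc', le_div_iff₀ (by positivity), mul_comm] at hT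
  exact_mod_cast le_of_mul_le_mul_right hT (by positivity)

theorem stmt3_general (n s t : ℕ) (hn : 1 ≤ n) (hs : 1 ≤ s) (hsn : s ≤ n)
    (p : ℕ) (hpn : 2 * n ^ 2 ≤ p)
    (F : Type*) [Field F] [CharP F p]
    (x : Fin t → Fin n → ℤ)
    (hx : ∀ i j, x i j = 1 ∨ x i j = -1)
    (hbal : ∀ i, |((∑ j, x i j : ℤ) : ℚ)| ≤ (n : ℚ) / (s : ℚ))
    (c : Fin t → F)
    (hspan : ∀ j, (1 : F) = ∑ i, c i * ((x i j : ℤ) : F)) :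
    s ≤ (t + 1).factorial := by
  set M : Matrix (Fin n) (Fin (t + 1)) ℤ := (Matrix.of (Fin.cons 1 x))ᵀ
  have hM : ∀ j l, |M j l| ≤ 1 := fun j l => by
    refine Fin.cases ?_ (fun i => ?_) l
    · simp [M]
    · rcases hx i j with h | h <;> simp [M, h]
  have hc : M.map (Int.cast : ℤ → F) *ᵥ Fin.cons (-1) c = 0 := funext fun j => by
    simp [M, mulVec, dotProduct, Fin.sum_univ_succ, ← hspan j, mul_comm]
  rcases exists_intCast_eq_zero_or_exists_mulVec_eq_zero hM hc (o := 0) (by simp) with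
    ⟨D, hD, hDle, hDF⟩ | ⟨α, hMα, hα0, hαle⟩
  · have hpD : (p : ℤ) ≤ |D| := Int.le_of_dvd (abs_pos.mpr hD)
      ((dvd_abs _ _).mpr ((CharP.intCast_eq_zero_iff F p D).mp hDF))
    have hnp : n < p := by nlinarith
    simp only [Fintype.card_fin] at hDle
    exact_mod_cast (show (s : ℤ) ≤ (t + 1)! by omega)
  · have hsum : α 0 * n + ∑ i, α i.succ * ∑ j, x i j = 0 := by
      simpa [M, sum_mulVec_transpose_of_cons_one] using congrArg (fun v => ∑ j, v j) hMα
    have hαs : ∑ i : Fin t, |α i.succ| ≤ ∑ l, |α l| := by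
      rw [Fin.sum_univ_succ]
      exact le_add_of_nonneg_left (abs_nonneg _)
    have := (le_sum_abs_of_add_sum_mul_eq_zero hn hs hbal hα0 hsum).trans (hαs.trans hαle)
    simpa using this

/-- No small span of balanced ±1 vectors containing the all-ones vector,
large prime characteristic case. Let `p ≥ 2n²` be a prime and `F` a field of characteristic
`p`. If the all-ones vector is an `F`-linear combination of `t` vectors in `{-1,1}^n` each
with coordinate sum at most `n/s` in absolute value, then `(t+1)! ≥ s`. -/
theorem stmt3 (n s t : ℕ) (hn : 1 ≤ n) (hs : 1 ≤ s) (ht : 1 ≤ t) (hsn : s ≤ n)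
    (p : ℕ) (hp : p.Prime) (hpn : 2 * n ^ 2 ≤ p)
    (F : Type*) [Field F] [CharP F p]
    (x : Fin t → Fin n → ℤ)
    (hx : ∀ i j, x i j = 1 ∨ x i j = -1)
    (hbal : ∀ i, |((∑ j, x i j : ℤ) : ℚ)| ≤ (n : ℚ) / (s : ℚ))
    (c : Fin t → F)
    (hspan : ∀ j, (1 : F) = ∑ i, c i * ((x i j : ℤ) : F)) :
    s ≤ (t + 1).factorial :=
  stmt3_general n s t hn hs hsn p hpn F x hx hbal c hspan
end

section
/- Let p be a prime, d ≥ 0 an integer, and let k be the smallest power of p that is strictly greater than d. Then for every i ∈ {0, 1, …, d}, the binomial coefficient C(d+k−i, k−i) is not divisible by p if and only if i = 0. -/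
/-!
Over `ZMod p` the Frobenius gives `(X + 1) ^ (m + p ^ j) = (X + 1) ^ m * (X ^ p ^ j + 1)`, so
`C(m + p^j, r) ≡ C(m, r) + C(m, r - p^j)` (the second term only when `p^j ≤ r`). With `k = p^j`,
`m = d - i` and `r = k - i`: for `i = 0` this gives `C(d, k) + C(d, 0) = 1`, and for `0 < i ≤ d`
it gives `C(d - i, k - i) = 0` because `d - i < k - i`.
-/

open Polynomial

namespace Nat

variable {p : ℕ} [Fact p.Prime]

theorem cast_choose_add_prime_pow (m j r : ℕ) :
    ((m + p ^ j).choose r : ZMod p) =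
      m.choose r + if p ^ j ≤ r then (m.choose (r - p ^ j) : ZMod p) else 0 := by
  have hfrob : ((X : (ZMod p)[X]) + 1) ^ (m + p ^ j) = (X + 1) ^ m * X ^ p ^ j + (X + 1) ^ m := by
    rw [pow_add, add_pow_char_pow, one_pow, mul_add, mul_one]
  have := congrArg (coeff · r) hfrob
  simp only [coeff_add, coeff_mul_X_pow', coeff_X_add_one_pow] at this
  rw [this, add_comm]

theorem cast_choose_add_prime_pow_of_lt {m j r : ℕ} (hr : r < p ^ j) :
    ((m + p ^ j).choose r : ZMod p) = m.choose r := by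
  simp [cast_choose_add_prime_pow, hr.not_ge]

theorem cast_choose_add_prime_pow_self {m j : ℕ} (hm : m < p ^ j) :
    ((m + p ^ j).choose (p ^ j) : ZMod p) = 1 := by
  simp [cast_choose_add_prime_pow, choose_eq_zero_of_lt hm]

end Nat

theorem stmt4_general (p : ℕ) (hp : p.Prime) (d k : ℕ)
    (hkpow : ∃ j : ℕ, k = p ^ j) (hdk : d < k) :
    ∀ i ≤ d, (¬ p ∣ (d + k - i).choose (k - i)) ↔ i = 0 := by
  obtain ⟨j, rfl⟩ := hkpow
  have : Fact p.Prime := ⟨hp⟩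
  intro i hi
  rw [← ZMod.natCast_eq_zero_iff, not_iff_comm]
  rcases Nat.eq_zero_or_pos i with rfl | hi₀
  · simp [Nat.cast_choose_add_prime_pow_self hdk]
  · have hsplit : d + p ^ j - i = (d - i) + p ^ j := by omega
    rw [hsplit, Nat.cast_choose_add_prime_pow_of_lt (by omega),
      Nat.choose_eq_zero_of_lt (by omega)]
    simp [hi₀.ne']

/-- Corollary of Lucas' theorem. Let `p` be a prime, `d ≥ 0`, and let `k` be
the smallest power of `p` strictly greater than `d`. Then for every `i ∈ {0,…,d}`,
`C(d+k−i, k−i)` is not divisible by `p` if and only if `i = 0`. -/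
theorem stmt4 (p : ℕ) (hp : p.Prime) (d k : ℕ)
    (hkpow : ∃ j : ℕ, k = p ^ j) (hdk : d < k)
    (hmin : ∀ j : ℕ, d < p ^ j → k ≤ p ^ j) :
    ∀ i ≤ d, (¬ p ∣ (d + k - i).choose (k - i)) ↔ i = 0 :=
  stmt4_general p hp d k hkpow hdk
end

section
/- Let p be a prime, F a field of characteristic p, d ≥ 0 an integer, and let k be the smallest power of p strictly greater than d. Let B' = { y ∈ {0,1}^{2k} : Σ_{i=1}^{2k} y_i = k, and y_i = 0 for all i with k+d < i ≤ 2k }. Then for every G ∈ F(2k, d): Σ_{y ∈ B'} G(y) = C(d+k, k) · G(0^{2k}) in F, where the binomial coefficient C(d+k,k) is cast into F via the canonical map ℕ → F; moreover the image of C(d+k, k) in F is nonzero. -/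
open Polynomial Finset


lemma coeff_lemma (p : ℕ) (hp : p.Prime) (F : Type*) [Field F] [CharP F p]
    (j e r : ℕ) :
    (((p ^ j + e).choose r : ℕ) : F)
      = (if p ^ j ≤ r then ((e.choose (r - p ^ j) : ℕ) : F) else 0)
        + ((e.choose r : ℕ) : F) := by
  haveI : Fact p.Prime := ⟨hp⟩
  have h1 : ((X + 1 : F[X])) ^ (p ^ j) = X ^ (p ^ j) + 1 := by
    rw [add_pow_char_pow, one_pow]
  have h2 : ((X + 1 : F[X])) ^ (p ^ j + e) = (X + 1) ^ e * X ^ (p ^ j) + (X + 1) ^ e := by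
    rw [pow_add, h1]; ring
  have h3 := congrArg (fun q : F[X] => q.coeff r) h2
  simpa [coeff_X_add_one_pow, coeff_mul_X_pow'] using h3

lemma card_A (n m : ℕ) (hm : m ≤ n) :
    (Finset.univ.filter (fun i : Fin n => i.val < m)).card = m := by
  have h : (Finset.univ.filter (fun i : Fin n => i.val < m)).image Fin.val
      = Finset.range m := by
    ext a
    simp only [mem_image, mem_filter, mem_univ, true_and, mem_range]
    constructor
    · rintro ⟨i, hi, rfl⟩; exact hi
    · intro ha; exact ⟨⟨a, lt_of_lt_of_le ha hm⟩, ha, rfl⟩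
  have := congrArg Finset.card h
  rwa [card_image_of_injective _ Fin.val_injective, card_range] at this

lemma count_lemma (n m k : ℕ) (hm : m ≤ n) (S : Finset (Fin n))
    (hSA : ∀ i ∈ S, i.val < m) (hSk : S.card ≤ k) :
    ((Finset.univ.filter (fun y : Fin n → Bool =>
        ((Finset.univ.filter (fun i => y i = true)).card = k ∧
          ∀ i : Fin n, m ≤ i.val → y i = false) ∧ ∀ i ∈ S, y i = true)).card)
      = (m - S.card).choose (k - S.card) := by
  classical
  set A : Finset (Fin n) := Finset.univ.filter (fun i : Fin n => i.val < m) with hA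
  have hSsub : S ⊆ A := fun i hi => by simp [hA, hSA i hi]
  have hcardAS : (A \ S).card = m - S.card := by
    rw [card_sdiff_of_subset hSsub, card_A n m hm]
  rw [← hcardAS, ← Finset.card_powersetCard]
  apply Finset.card_bij' (fun y _ => (Finset.univ.filter (fun i => y i = true)) \ S)
    (fun U _ => (fun i => decide (i ∈ U ∪ S)))
  · intro y hy
    simp only [mem_filter, mem_univ, true_and] at hy
    obtain ⟨⟨hcard, hzero⟩, hSy⟩ := hy
    rw [Finset.mem_powersetCard]
    constructor
    · intro i hi
      simp only [mem_sdiff, mem_filter, mem_univ, true_and] at hi ⊢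
      refine ⟨?_, hi.2⟩
      simp only [hA, mem_filter, mem_univ, true_and]
      by_contra h
      exact absurd (hzero i (le_of_not_gt h)) (by simp [hi.1])
    · rw [card_sdiff_of_subset, hcard]
      intro i hi
      simp only [mem_filter, mem_univ, true_and]
      exact hSy i hi
  · intro U hU
    rw [Finset.mem_powersetCard] at hU
    obtain ⟨hUsub, hUcard⟩ := hU
    have hdisj : Disjoint U S := by
      intro T hTU hTS i hi
      have := hUsub (hTU hi)
      simp only [mem_sdiff] at this
      exact absurd (hTS hi) this.2
    simp only [mem_filter, mem_univ, true_and]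
    refine ⟨⟨?_, ?_⟩, ?_⟩
    · have : (Finset.univ.filter (fun i => decide (i ∈ U ∪ S) = true)) = U ∪ S := by
        ext i; simp
      rw [this, card_union_of_disjoint hdisj, hUcard, Nat.sub_add_cancel hSk]
    · intro i hi
      simp only [decide_eq_false_iff_not, mem_union]
      rintro (h | h)
      · have := hUsub h
        simp only [mem_sdiff, hA, mem_filter, mem_univ, true_and] at this
        omega
      · have := hSA i h; omega
    · intro i hi
      simp [hi]
  · intro y hy
    simp only [mem_filter, mem_univ, true_and] at hy
    funext i
    simp only [mem_union, mem_sdiff, mem_filter, mem_univ, true_and]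
    by_cases h : y i = true
    · simp only [h, decide_eq_true_eq]
      by_cases hS : i ∈ S
      · simp [hS]
      · simp [hS, h]
    · have hS : i ∉ S := fun hS => h (hy.2 i hS)
      simp [h, hS]
  · intro U hU
    rw [Finset.mem_powersetCard] at hU
    have hdisj : Disjoint U S := by
      intro T hTU hTS i hi
      have := hU.1 (hTU hi)
      simp only [mem_sdiff] at this
      exact absurd (hTS hi) this.2
    have : (Finset.univ.filter (fun i => decide (i ∈ U ∪ S) = true)) = U ∪ S := by
      ext i; simp
    rw [this, Finset.union_sdiff_right, Finset.sdiff_eq_self_of_disjoint hdisj]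



/-- `IsPolyDeg d f` means `f : {0,1}^ι → F` is computed by a multilinear polynomial of
total degree at most `d`. -/
def IsPolyDeg {ι : Type*} [Fintype ι] [DecidableEq ι] {F : Type*} [Field F]
    (d : ℕ) (f : (ι → Bool) → F) : Prop :=
  ∃ α : Finset ι → F, (∀ S : Finset ι, d < S.card → α S = 0) ∧
    ∀ x : ι → Bool, f x = ∑ S : Finset ι, α S * ∏ i ∈ S, (if x i then (1 : F) else 0)

/-- Let `p` be a prime, `F` a field of characteristic `p`, `d ≥ 0`, and `k`
the smallest power of `p` strictly greater than `d`. Let `B'` be the set of balanced inputs in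
`{0,1}^{2k}` (Hamming weight exactly `k`) that are `0` on all coordinates beyond the first
`k + d`. Then for every `G ∈ F(2k, d)`, `Σ_{y ∈ B'} G(y) = C(d+k, k) · G(0^{2k})` in `F`, and
the image of `C(d+k, k)` in `F` is nonzero. -/
theorem stmt5 (p : ℕ) (hp : p.Prime)
    (F : Type*) [Field F] [CharP F p]
    (d k : ℕ) (hkpow : ∃ j : ℕ, k = p ^ j) (hdk : d < k)
    (hmin : ∀ j : ℕ, d < p ^ j → k ≤ p ^ j)
    (G : (Fin (2 * k) → Bool) → F) (hG : IsPolyDeg d G) :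
    (∑ y ∈ Finset.univ.filter (fun y : Fin (2 * k) → Bool =>
        (Finset.univ.filter (fun i => y i = true)).card = k ∧
        ∀ i : Fin (2 * k), k + d ≤ i.val → y i = false), G y)
      = (((d + k).choose k : ℕ) : F) * G (fun _ => false) ∧
    (((d + k).choose k : ℕ) : F) ≠ 0 := by
  classical
  obtain ⟨j, hkj⟩ := hkpow
  obtain ⟨α, hα0, hαG⟩ := hG
  -- the binomial coefficient is 1 in F
  have hchoose1 : (((d + k).choose k : ℕ) : F) = 1 := by
    have h := coeff_lemma p hp F j d k
    rw [← hkj] at h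
    rw [Nat.add_comm d k, h, if_pos le_rfl, Nat.sub_self,
      Nat.choose_zero_right, Nat.choose_eq_zero_of_lt hdk]
    simp
  -- counts for nonempty S vanish in F
  have hzero : ∀ s : ℕ, 1 ≤ s → s ≤ d →
      (((k + d - s).choose (k - s) : ℕ) : F) = 0 := by
    intro s h1 h2
    have he : k + d - s = p ^ j + (d - s) := by omega
    rw [he, coeff_lemma p hp F j (d - s) (k - s),
      if_neg (by omega : ¬ p ^ j ≤ k - s),
      Nat.choose_eq_zero_of_lt (by omega : d - s < k - s)]
    simp
  have hG0 : G (fun _ => false) = α ∅ := by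
    rw [hαG]
    rw [Finset.sum_eq_single ∅]
    · simp
    · intro S _ hS
      obtain ⟨i, hi⟩ := Finset.nonempty_iff_ne_empty.2 hS
      rw [Finset.prod_eq_zero hi (by simp), mul_zero]
    · intro h; exact absurd (Finset.mem_univ _) h
  set B := Finset.univ.filter (fun y : Fin (2 * k) → Bool =>
        (Finset.univ.filter (fun i => y i = true)).card = k ∧
        ∀ i : Fin (2 * k), k + d ≤ i.val → y i = false) with hB
  have hmain : ∑ y ∈ B, G y = (((d + k).choose k : ℕ) : F) * G (fun _ => false) := by
    calc ∑ y ∈ B, G y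
        = ∑ y ∈ B, ∑ S : Finset (Fin (2 * k)),
            α S * ∏ i ∈ S, (if y i then (1 : F) else 0) :=
          Finset.sum_congr rfl fun y _ => hαG y
      _ = ∑ S : Finset (Fin (2 * k)), ∑ y ∈ B,
            α S * ∏ i ∈ S, (if y i then (1 : F) else 0) := Finset.sum_comm
      _ = ∑ S : Finset (Fin (2 * k)),
            α S * ((B.filter (fun y => ∀ i ∈ S, y i = true)).card : F) := by
          refine Finset.sum_congr rfl fun S _ => ?_
          rw [← Finset.mul_sum]
          congr 1
          have hc : ((B.filter (fun y => ∀ i ∈ S, y i = true)).card : F)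
              = ∑ y ∈ B, (if ∀ i ∈ S, y i = true then (1 : F) else 0) := by
            rw [Finset.card_filter]
            push_cast
            exact Finset.sum_congr rfl fun y _ => by
              by_cases h : ∀ i ∈ S, y i = true <;> simp [h]
          rw [Finset.sum_congr rfl (fun y _ => Finset.prod_boole), hc]
          exact Finset.sum_congr rfl fun y _ => by
            by_cases h : ∀ i ∈ S, y i = true <;> simp [h]
      _ = ∑ S : Finset (Fin (2 * k)),
            (if S = ∅ then (((d + k).choose k : ℕ) : F) * α ∅ else 0) := by
          refine Finset.sum_congr rfl fun S _ => ?_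
          by_cases hS : S = ∅
          · subst hS
            rw [if_pos rfl, hB, Finset.filter_filter,
              count_lemma (2 * k) (k + d) k (by omega) ∅ (by simp) (by simp)]
            simp only [Finset.card_empty, Nat.sub_zero]
            rw [mul_comm, Nat.add_comm k d]
          · rw [if_neg hS]
            by_cases hcard : d < S.card
            · rw [hα0 S hcard, zero_mul]
            · by_cases hsub : ∀ i ∈ S, i.val < k + d
              · rw [hB, Finset.filter_filter,
                  count_lemma (2 * k) (k + d) k (by omega) S hsub (by omega),
                  hzero S.card (Finset.one_le_card.2
                    (Finset.nonempty_iff_ne_empty.2 hS)) (by omega), mul_zero]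
              · push_neg at hsub
                obtain ⟨i, hiS, hi⟩ := hsub
                have hempty : B.filter (fun y => ∀ i ∈ S, y i = true) = ∅ := by
                  rw [Finset.filter_eq_empty_iff]
                  intro y hy hall
                  rw [hB, Finset.mem_filter] at hy
                  have h1 := hall i hiS
                  have h2 := hy.2.2 i hi
                  rw [h1] at h2; exact absurd h2 (by decide)
                rw [hempty]
                simp
      _ = (((d + k).choose k : ℕ) : F) * α ∅ := by
          rw [Finset.sum_ite_eq' Finset.univ ∅
            (fun _ => (((d + k).choose k : ℕ) : F) * α ∅)]
          simp
      _ = (((d + k).choose k : ℕ) : F) * G (fun _ => false) := by rw [hG0]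
  exact ⟨hmain, by rw [hchoose1]; exact one_ne_zero⟩
end

section
/- Let p be a prime, F a field of characteristic p, d ≥ 0 an integer, and let k be the smallest power of p strictly greater than d. Let B = { y ∈ {0,1}^{2k} : Σ_{i=1}^{2k} y_i = k } be the set of balanced inputs. Then B is useful for F(2k, d): for any G, G' ∈ F(2k, d) satisfying G(y) = G'(y) for every y ∈ B, it holds that G(0^{2k}) = G'(0^{2k}). -/
/-- Kummer-style lemma: if `a, b < p ^ n ≤ a + b`, then adding `a` and `b` in base `p`
produces a carry, hence `p` divides `(a+b).choose a`. -/
lemma stmt6_kummer_aux (p : ℕ) (hp : p.Prime) :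
    ∀ (n a b : ℕ), a < p ^ n → b < p ^ n → p ^ n ≤ a + b → p ∣ (a + b).choose a := by
  intro n
  induction n with
  | zero => intro a b ha hb h; rw [pow_zero] at ha hb h; omega
  | succ n ih =>
    intro a b ha hb h
    haveI : Fact p.Prime := ⟨hp⟩
    have hp0 : 0 < p := hp.pos
    have hlucas := Choose.choose_modEq_choose_mod_mul_choose_div_nat
      (n := a + b) (k := a) (p := p)
    have hap : a % p < p := Nat.mod_lt _ hp0
    have hbp : b % p < p := Nat.mod_lt _ hp0
    rw [← Nat.modEq_zero_iff_dvd]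
    refine hlucas.trans ?_
    have e : a + b = (a % p + b % p) + p * (a / p + b / p) := by
      have ea := Nat.div_add_mod a p
      have eb := Nat.div_add_mod b p
      rw [mul_add]; omega
    by_cases hc : p ≤ a % p + b % p
    · -- carry at digit 0
      have h1 : (a + b) % p = a % p + b % p - p := by
        rw [Nat.add_mod, Nat.mod_eq_sub_mod hc, Nat.mod_eq_of_lt (by omega)]
      have h2 : (a + b) % p < a % p := by omega
      rw [Nat.choose_eq_zero_of_lt h2, zero_mul]
    · have h1 : (a + b) % p = a % p + b % p := by
        rw [Nat.add_mod, Nat.mod_eq_of_lt (by omega)]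
      have h2 : (a + b) / p = a / p + b / p := by
        rw [e, Nat.add_mul_div_left _ _ hp0, Nat.div_eq_of_lt (by omega), zero_add]
      have hadiv : a / p < p ^ n := by
        rw [Nat.div_lt_iff_lt_mul hp0]
        calc a < p ^ (n+1) := ha
          _ = p ^ n * p := by ring
      have hbdiv : b / p < p ^ n := by
        rw [Nat.div_lt_iff_lt_mul hp0]
        calc b < p ^ (n+1) := hb
          _ = p ^ n * p := by ring
      have hsum : p ^ n ≤ a / p + b / p := by
        by_contra hlt
        push_neg at hlt
        have hq : 1 ≤ p ^ n := Nat.one_le_pow _ _ hp0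
        have hmul : p * (a / p + b / p) ≤ p * (p ^ n - 1) :=
          Nat.mul_le_mul_left _ (by omega)
        have h3 : p * (p ^ n - 1) + p = p ^ (n + 1) := by
          have h4 : p ^ n - 1 + 1 = p ^ n := by omega
          calc p * (p ^ n - 1) + p = p * ((p ^ n - 1) + 1) := by ring
            _ = p * p ^ n := by rw [h4]
            _ = p ^ (n + 1) := by ring
        omega
      have hdvd : p ∣ ((a + b) / p).choose (a / p) := by
        rw [h2]; exact ih _ _ hadiv hbdiv hsum
      rw [Nat.modEq_zero_iff_dvd]
      exact Dvd.dvd.mul_left hdvd _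

/-- By Lucas' theorem, `C(2 p^j - 1, p^j) ≡ 1 (mod p)`. -/
lemma stmt6_lucas_central (p : ℕ) (hp : p.Prime) :
    ∀ j : ℕ, (2 * p ^ j - 1).choose (p ^ j) ≡ 1 [MOD p] := by
  haveI : Fact p.Prime := ⟨hp⟩
  have hp0 : 0 < p := hp.pos
  have hp2 : 2 ≤ p := hp.two_le
  intro j
  induction j with
  | zero => norm_num; rfl
  | succ j ih =>
    have hpj : 1 ≤ p ^ j := Nat.one_le_pow _ _ hp0
    have e : 2 * p ^ (j + 1) - 1 = (p - 1) + p * (2 * p ^ j - 1) := by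
      have h4 : 2 * p ^ j - 1 + 1 = 2 * p ^ j := by omega
      have h5 : p * (2 * p ^ j - 1) + p = p * p ^ j * 2 := by
        calc p * (2 * p ^ j - 1) + p = p * ((2 * p ^ j - 1) + 1) := by ring
          _ = p * (2 * p ^ j) := by rw [h4]
          _ = p * p ^ j * 2 := by ring
      have h6 : p ^ (j + 1) = p * p ^ j := by ring
      rw [h6]; omega
    have hmod : (2 * p ^ (j + 1) - 1) % p = p - 1 := by
      rw [e, Nat.add_mul_mod_self_left, Nat.mod_eq_of_lt (by omega)]
    have hdivn : (2 * p ^ (j + 1) - 1) / p = 2 * p ^ j - 1 := by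
      rw [e, Nat.add_mul_div_left _ _ hp0, Nat.div_eq_of_lt (by omega), zero_add]
    have hkmod : (p ^ (j + 1)) % p = 0 := by
      simp [pow_succ, Nat.mul_mod_left]
    have hkdiv : (p ^ (j + 1)) / p = p ^ j := by
      rw [pow_succ, Nat.mul_div_cancel _ hp0]
    have hlucas := Choose.choose_modEq_choose_mod_mul_choose_div_nat
      (n := 2 * p ^ (j + 1) - 1) (k := p ^ (j + 1)) (p := p)
    rw [hmod, hdivn, hkmod, hkdiv, Nat.choose_zero_right, one_mul] at hlucas
    exact hlucas.trans ih

/-- The balanced slice is useful. Let `p` be a prime, `F` a field of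
characteristic `p`, `d ≥ 0`, and `k` the smallest power of `p` strictly greater than `d`.
If two degree-`d` multilinear polynomials on `{0,1}^{2k}` agree on all inputs of Hamming
weight exactly `k`, then they agree at the all-zeros input. -/
theorem stmt6 (p : ℕ) (hp : p.Prime)
    (F : Type*) [Field F] [CharP F p]
    (d k : ℕ) (hkpow : ∃ j : ℕ, k = p ^ j) (hdk : d < k)
    (hmin : ∀ j : ℕ, d < p ^ j → k ≤ p ^ j)
    (G G' : (Fin (2 * k) → Bool) → F) (hG : IsPolyDeg d G) (hG' : IsPolyDeg d G')
    (hagree : ∀ y : Fin (2 * k) → Bool,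
      (Finset.univ.filter (fun i => y i = true)).card = k → G y = G' y) :
    G (fun _ => false) = G' (fun _ => false) := by
  classical
  obtain ⟨j, hkj⟩ := hkpow
  obtain ⟨α, hαd, hαeval⟩ := hG
  obtain ⟨α', hα'd, hα'eval⟩ := hG'
  have hk1 : 1 ≤ k := by omega
  -- evaluation at the all-zeros input picks out the constant coefficient
  have heval0 : ∀ (γ : Finset (Fin (2 * k)) → F) (f : (Fin (2 * k) → Bool) → F),
      (∀ x, f x = ∑ S : Finset (Fin (2 * k)), γ S * ∏ i ∈ S, (if x i then (1 : F) else 0)) →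
      f (fun _ => false) = γ ∅ := by
    intro γ f hf
    rw [hf]
    rw [Finset.sum_eq_single ∅]
    · simp
    · intro S _ hS
      obtain ⟨i, hi⟩ := Finset.nonempty_iff_ne_empty.2 hS
      rw [Finset.prod_eq_zero hi]
      · ring
      · simp
    · intro h; exact absurd (Finset.mem_univ _) h
  have hG0 : G (fun _ => false) = α ∅ := heval0 α G hαeval
  have hG'0 : G' (fun _ => false) = α' ∅ := heval0 α' G' hα'eval
  -- the distinguished coordinate, to be excluded
  set last : Fin (2 * k) := ⟨2 * k - 1, by omega⟩ with hlast
  set U : Finset (Fin (2 * k)) := Finset.univ.erase last with hUdef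
  have hUcard : U.card = 2 * k - 1 := by
    rw [hUdef, Finset.card_erase_of_mem (Finset.mem_univ _)]
    simp
  set 𝒯 : Finset (Finset (Fin (2 * k))) := Finset.powersetCard k U with h𝒯
  -- products of indicators are subset indicators
  have hprod : ∀ (S T : Finset (Fin (2 * k))),
      (∏ i ∈ S, (if decide (i ∈ T) then (1 : F) else 0)) = if S ⊆ T then 1 else 0 := by
    intro S T
    by_cases h : S ⊆ T
    · rw [if_pos h]
      apply Finset.prod_eq_one
      intro i hi
      simp [h hi]
    · rw [if_neg h]
      obtain ⟨i, hiS, hiT⟩ := Finset.not_subset.1 h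
      exact Finset.prod_eq_zero hiS (by simp [hiT])
  -- every T ∈ 𝒯 gives a balanced input, so G and G' agree there
  have hzero : ∑ T ∈ 𝒯, (G (fun i => decide (i ∈ T)) - G' (fun i => decide (i ∈ T))) = 0 := by
    apply Finset.sum_eq_zero
    intro T hT
    rw [h𝒯, Finset.mem_powersetCard] at hT
    have hfe : Finset.univ.filter (fun i => (fun i => decide (i ∈ T)) i = true) = T := by
      ext i; simp
    have hcard : (Finset.univ.filter
        (fun i => (fun i => decide (i ∈ T)) i = true)).card = k := by
      rw [hfe]; exact hT.2
    rw [hagree _ hcard, sub_self]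
  -- swap summations to get moment form
  have hswap : ∑ T ∈ 𝒯, (G (fun i => decide (i ∈ T)) - G' (fun i => decide (i ∈ T)))
      = ∑ S : Finset (Fin (2 * k)),
          (α S - α' S) * ((𝒯.filter (fun T => S ⊆ T)).card : F) := by
    calc ∑ T ∈ 𝒯, (G (fun i => decide (i ∈ T)) - G' (fun i => decide (i ∈ T)))
        = ∑ T ∈ 𝒯, ∑ S : Finset (Fin (2 * k)),
            (α S - α' S) * (if S ⊆ T then 1 else 0) := by
          refine Finset.sum_congr rfl fun T _ => ?_
          simp only [hαeval, hα'eval]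
          rw [← Finset.sum_sub_distrib]
          refine Finset.sum_congr rfl fun S _ => ?_
          rw [← sub_mul, hprod]
      _ = ∑ S : Finset (Fin (2 * k)), ∑ T ∈ 𝒯,
            (α S - α' S) * (if S ⊆ T then 1 else 0) := Finset.sum_comm
      _ = ∑ S : Finset (Fin (2 * k)),
            (α S - α' S) * ((𝒯.filter (fun T => S ⊆ T)).card : F) := by
          refine Finset.sum_congr rfl fun S _ => ?_
          rw [← Finset.mul_sum, Finset.sum_boole]
  -- counting: the number of T ∈ 𝒯 containing a fixed S ⊆ U
  have hcount : ∀ S : Finset (Fin (2 * k)), S ⊆ U → S.card ≤ k →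
      (𝒯.filter (fun T => S ⊆ T)).card = (2 * k - 1 - S.card).choose (k - S.card) := by
    intro S hSU hSk
    have hUS : (U \ S).card = 2 * k - 1 - S.card := by
      rw [Finset.card_sdiff_of_subset hSU, hUcard]
    rw [← hUS, ← Finset.card_powersetCard]
    refine Finset.card_bij' (fun T _ => T \ S) (fun R _ => R ∪ S) ?_ ?_ ?_ ?_
    · intro T hT
      rw [Finset.mem_filter, h𝒯, Finset.mem_powersetCard] at hT
      rw [Finset.mem_powersetCard]
      exact ⟨Finset.sdiff_subset_sdiff hT.1.1 (Finset.Subset.refl _),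
        by rw [Finset.card_sdiff_of_subset hT.2, hT.1.2]⟩
    · intro R hR
      rw [Finset.mem_powersetCard] at hR
      obtain ⟨hRU, hRdisj⟩ := Finset.subset_sdiff.1 hR.1
      rw [Finset.mem_filter, h𝒯, Finset.mem_powersetCard]
      refine ⟨⟨Finset.union_subset hRU hSU, ?_⟩, Finset.subset_union_right⟩
      rw [Finset.card_union_of_disjoint hRdisj, hR.2]
      omega
    · intro T hT
      rw [Finset.mem_filter] at hT
      exact Finset.sdiff_union_of_subset hT.2
    · intro R hR
      rw [Finset.mem_powersetCard] at hR
      obtain ⟨hRU, hRdisj⟩ := Finset.subset_sdiff.1 hR.1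
      show (R ∪ S) \ S = R
      rw [Finset.union_sdiff_distrib, Finset.sdiff_self, Finset.union_empty,
        Disjoint.sdiff_eq_left hRdisj]
  -- nonempty small monomials have vanishing moments
  have hterm : ∀ S ∈ Finset.univ (α := Finset (Fin (2 * k))), S ≠ ∅ →
      (α S - α' S) * ((𝒯.filter (fun T => S ⊆ T)).card : F) = 0 := by
    intro S _ hSne
    by_cases hd : d < S.card
    · rw [hαd S hd, hα'd S hd, sub_self, zero_mul]
    · push_neg at hd
      have hSpos : 0 < S.card := Finset.card_pos.2 (Finset.nonempty_iff_ne_empty.2 hSne)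
      by_cases hlS : last ∈ S
      · have hfil : 𝒯.filter (fun T => S ⊆ T) = ∅ := by
          rw [Finset.filter_eq_empty_iff]
          intro T hT
          rw [h𝒯, Finset.mem_powersetCard] at hT
          intro hST
          have hmem := hT.1 (hST hlS)
          rw [hUdef, Finset.mem_erase] at hmem
          exact hmem.1 rfl
        rw [hfil]; simp
      · have hSU : S ⊆ U := by
          intro i hi
          rw [hUdef, Finset.mem_erase]
          exact ⟨fun h => hlS (h ▸ hi), Finset.mem_univ _⟩
        rw [hcount S hSU (by omega)]
        have he : 2 * k - 1 - S.card = (k - S.card) + (k - 1) := by omega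
        have hdvd : p ∣ (2 * k - 1 - S.card).choose (k - S.card) := by
          rw [he]
          exact stmt6_kummer_aux p hp j (k - S.card) (k - 1)
            (by rw [← hkj]; omega) (by rw [← hkj]; omega) (by rw [← hkj]; omega)
        rw [(CharP.cast_eq_zero_iff F p _).2 hdvd, mul_zero]
  -- conclude
  have hsum0 : ∑ S : Finset (Fin (2 * k)),
      (α S - α' S) * ((𝒯.filter (fun T => S ⊆ T)).card : F) = 0 := by
    rw [← hswap]; exact hzero
  have hsingle := Finset.sum_eq_single (s := Finset.univ)
    (f := fun S => (α S - α' S) * ((𝒯.filter (fun T => S ⊆ T)).card : F)) ∅ hterm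
    (fun h => absurd (Finset.mem_univ _) h)
  have hkey : (α ∅ - α' ∅) * ((𝒯.filter (fun T => (∅ : Finset (Fin (2 * k))) ⊆ T)).card : F)
      = 0 := hsingle.symm.trans hsum0
  rw [hcount ∅ (Finset.empty_subset _) (by simp)] at hkey
  simp only [Finset.card_empty, Nat.sub_zero] at hkey
  have hne : ((2 * k - 1).choose k : F) ≠ 0 := by
    intro h0
    have hdvd : p ∣ (2 * k - 1).choose k := (CharP.cast_eq_zero_iff F p _).1 h0
    have hmod := stmt6_lucas_central p hp j
    rw [← hkj] at hmod
    have h1 : (2 * k - 1).choose k % p = 1 % p := hmod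
    have h2 : (2 * k - 1).choose k % p = 0 := Nat.eq_zero_of_dvd_of_lt hdvd |> fun _ => by
      exact (Nat.mod_eq_zero_of_dvd hdvd)
    have h3 : 1 % p = 1 := Nat.mod_eq_of_lt hp.one_lt
    omega
  have : α ∅ - α' ∅ = 0 := by
    rcases mul_eq_zero.1 hkey with h | h
    · exact h
    · exact absurd h hne
  rw [hG0, hG'0]
  exact sub_eq_zero.1 this
end

section
/- Let F be a field and let k ≥ 1, d ≥ 0 be integers satisfying 2 · (C(k, ≤d) + 1) · C(k, ≤⌊k/4⌋) ≤ 2^k, where C(k, ≤b) = Σ_{j=0}^{b} C(k, j). Then there exists a non-empty set T ⊆ {0,1}^k such that: (1) |T| ≤ C(k, ≤d) + 1; (2) for all distinct y', y'' ∈ T, min(Δ(y', y''), k − Δ(y', y'')) ≥ k/4, where Δ denotes Hamming distance; and (3) for all P, P' ∈ F(k, d), the number of points y ∈ T with P(y) ≠ P'(y) is not equal to 1. -/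
/-- `C(k, ≤ b) = Σ_{j=0}^b C(k, j)`. -/
def binomLE (k b : ℕ) : ℕ := ∑ j ∈ Finset.range (b + 1), k.choose j

open Finset

section Greedy

variable {α : Type*} [Fintype α] [DecidableEq α] {r : α → α → Prop} [DecidableRel r]

theorem exists_notMem_forall_rel_of_card_mul_lt (hirr : ∀ x, ¬ r x x) {B : ℕ}
    (hB : ∀ x, #{y | ¬ r x y} ≤ B) (S : Finset α) (hS : #S * B < Fintype.card α) :
    ∃ x ∉ S, ∀ s ∈ S, r s x := by
  have hcard : #(S.biUnion fun s => {y | ¬ r s y}) < #(univ : Finset α) :=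
    calc _ ≤ #S * B := card_biUnion_le_card_mul _ _ _ fun s _ => hB s
      _ < _ := hS
  obtain ⟨x, -, hx⟩ := exists_mem_notMem_of_card_lt_card hcard
  have hxS : ∀ s ∈ S, r s x := fun s hs => by
    by_contra h
    exact hx (mem_biUnion.mpr ⟨s, hs, by simpa using h⟩)
  exact ⟨x, fun hx => hirr x (hxS x hx), hxS⟩

theorem exists_card_eq_pairwise_of_mul_lt [Std.Symm r] (hirr : ∀ x, ¬ r x x) {B : ℕ}
    (hB : ∀ x, #{y | ¬ r x y} ≤ B) (n : ℕ) (hn : n * B < Fintype.card α) :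
    ∃ S : Finset α, #S = n + 1 ∧ (S : Set α).Pairwise r := by
  induction n with
  | zero =>
    obtain ⟨x, -, -⟩ := exists_notMem_forall_rel_of_card_mul_lt hirr hB ∅ (by simpa using hn)
    exact ⟨{x}, card_singleton x, by simp⟩
  | succ n ih =>
    obtain ⟨S, hS, hSr⟩ := ih (lt_of_le_of_lt (Nat.mul_le_mul_right B n.le_succ) hn)
    obtain ⟨x, hxS, hx⟩ := exists_notMem_forall_rel_of_card_mul_lt hirr hB S (by rwa [hS])
    refine ⟨insert x S, by rw [card_insert_of_notMem hxS, hS], ?_⟩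
    rw [coe_insert, Set.pairwise_insert_of_symm_of_notMem (by simpa using hxS)]
    exact ⟨hSr, fun s hs => Std.Symm.symm _ _ (hx s hs)⟩

end Greedy

section Hamming

variable {ι : Type*} [Fintype ι]

theorem card_filter_card_le (m : ℕ) :
    #{A : Finset ι | A.card ≤ m} = binomLE (Fintype.card ι) m := by
  rw [card_eq_sum_card_fiberwise (f := card) (t := range (m + 1))
    fun A hA => by simpa [Nat.lt_succ_iff] using hA, binomLE]
  refine sum_congr rfl fun j hj => ?_
  rw [← card_univ, ← card_powersetCard, powersetCard_eq_filter, filter_filter]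
  congr 1
  ext A
  simp only [mem_filter, mem_univ, mem_powerset, subset_univ, true_and]
  have := mem_range.mp hj
  constructor <;> rintro h <;> omega

theorem one_le_binomLE (k m : ℕ) : 1 ≤ binomLE k m :=
  (Nat.choose_zero_right k).symm.le.trans
    (single_le_sum (fun _ _ => Nat.zero_le _) (mem_range.mpr m.succ_pos))

theorem hammingDist_not_right (x y : ι → Bool) :
    hammingDist x (fun i => !y i) = Fintype.card ι - hammingDist x y := by
  rw [← card_univ, ← card_filter_add_card_filter_not (fun i => x i ≠ y i), hammingDist,
    hammingDist, Nat.add_sub_cancel_left]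
  congr 1
  ext i
  cases x i <;> cases y i <;> simp

variable [DecidableEq ι]

theorem card_filter_hammingDist_le (y : ι → Bool) (m : ℕ) :
    #{x | hammingDist x y ≤ m} ≤ binomLE (Fintype.card ι) m := by
  rw [← card_filter_card_le]
  refine card_le_card_of_injOn (fun x => ({i | x i ≠ y i} : Finset ι)) (fun x hx => ?_)
    fun x _ x' _ h => ?_
  · simpa [hammingDist] using hx
  · funext i
    have := Finset.ext_iff.mp h i
    simp only [mem_filter, mem_univ, true_and] at this
    cases hx : x i <;> cases hx' : x' i <;> cases y i <;> simp_all

theorem card_filter_min_hammingDist_le (y : ι → Bool) (m : ℕ) :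
    #{x | min (hammingDist y x) (Fintype.card ι - hammingDist y x) ≤ m}
      ≤ 2 * binomLE (Fintype.card ι) m := by
  have hsub : ({x | min (hammingDist y x) (Fintype.card ι - hammingDist y x) ≤ m} : Finset _)
      ⊆ ({x | hammingDist x y ≤ m} : Finset _) ∪
        ({x | hammingDist x (fun i => !y i) ≤ m} : Finset _) := by
    intro x hx
    simp only [mem_filter, mem_univ, true_and, mem_union, hammingDist_not_right,
      hammingDist_comm y x, min_le_iff] at hx ⊢
    exact hx
  calc _ ≤ _ := card_le_card hsub
    _ ≤ _ := card_union_le _ _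
    _ ≤ _ := by
      have := card_filter_hammingDist_le y m
      have := card_filter_hammingDist_le (fun i => !y i) m
      omega

end Hamming

section Annihilator

variable {ι : Type*} [Fintype ι] [DecidableEq ι] {F : Type*} [Field F]

theorem exists_subset_sum_mul_eq_zero_of_isPolyDeg {d : ℕ} (S : Finset (ι → Bool))
    (hS : binomLE (Fintype.card ι) d < #S) :
    ∃ T ⊆ S, T.Nonempty ∧ ∃ c : (ι → Bool) → F, (∀ y ∈ T, c y ≠ 0) ∧
      ∀ P, IsPolyDeg d P → ∑ y ∈ T, c y * P y = 0 := by
  classical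
  let v : (ι → Bool) → {A : Finset ι // A.card ≤ d} → F :=
    fun x A => ∏ i ∈ A.1, if x i then 1 else 0
  have hdep : ¬ LinearIndepOn F v S := fun h => by
    have := h.fintype_card_le_finrank
    simp only [coe_sort_coe, Fintype.card_coe, Module.finrank_fintype_fun_eq_card] at this
    rw [Fintype.card_subtype, card_filter_card_le] at this
    omega
  obtain ⟨c, hc, y, hy, hcy⟩ := not_linearIndepOn_finset_iff.mp hdep
  refine ⟨{y ∈ S | c y ≠ 0}, filter_subset _ _, ⟨y, mem_filter.mpr ⟨hy, hcy⟩⟩, c,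
    fun y hy => (mem_filter.mp hy).2, ?_⟩
  rintro P ⟨a, ha, hP⟩
  rw [sum_filter_of_ne fun y _ h => left_ne_zero_of_mul h]
  have hmono (A : Finset ι) (hA : A.card ≤ d) :
      ∑ y ∈ S, c y * ∏ i ∈ A, (if y i then (1 : F) else 0) = 0 := by
    simpa [v] using congr_fun hc ⟨A, hA⟩
  calc ∑ y ∈ S, c y * P y
      = ∑ A, a A * ∑ y ∈ S, c y * ∏ i ∈ A, (if y i then (1 : F) else 0) := by
        simp_rw [hP, mul_sum, sum_comm (s := S)]
        exact sum_congr rfl fun A _ => sum_congr rfl fun y _ => by ring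
    _ = 0 := sum_eq_zero fun A _ => by
        by_cases hA : A.card ≤ d
        · rw [hmono A hA, mul_zero]
        · rw [ha A (not_le.mp hA), zero_mul]

end Annihilator

theorem cast_div_le_of_div_lt {α : Type*} [Field α] [LinearOrder α] [IsStrictOrderedRing α]
    {k n m : ℕ} (h : k / n < m) : (k : α) / n ≤ m := by
  rcases n.eq_zero_or_pos with rfl | hn
  · simp
  · rw [div_le_iff₀ (by positivity)]
    exact_mod_cast ((Nat.div_lt_iff_lt_mul hn).mp h).le

theorem card_filter_ne_ne_one_of_sum_mul_eq {α R : Type*} [Ring R] [NoZeroDivisors R]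
    [DecidableEq R] {T : Finset α} {c : α → R} (hc : ∀ y ∈ T, c y ≠ 0) {P P' : α → R}
    (h : ∑ y ∈ T, c y * P y = ∑ y ∈ T, c y * P' y) : #{y ∈ T | P y ≠ P' y} ≠ 1 := by
  intro h1
  obtain ⟨y₀, hy₀⟩ := card_eq_one.mp h1
  have hy₀T : y₀ ∈ T ∧ P y₀ ≠ P' y₀ := mem_filter.mp (hy₀ ▸ mem_singleton_self y₀)
  have hsum : ∑ y ∈ T, c y * (P y - P' y) = 0 := by
    simp only [mul_sub, sum_sub_distrib, h, sub_self]
  rw [← sum_filter_of_ne (p := fun y => P y ≠ P' y), hy₀, sum_singleton] at hsum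
  · exact mul_ne_zero (hc y₀ hy₀T.1) (sub_ne_zero.mpr hy₀T.2) hsum
  · intro y _ hy
    contrapose! hy
    rw [hy, sub_self, mul_zero]

open scoped Classical in
theorem stmt8_general (F : Type*) [Field F] (k d : ℕ)
    (hcond : 2 * (binomLE k d + 1) * binomLE k (k / 4) ≤ 2 ^ k) :
    ∃ T : Finset (Fin k → Bool), T.Nonempty ∧ T.card ≤ binomLE k d + 1 ∧
      (∀ y' ∈ T, ∀ y'' ∈ T, y' ≠ y'' →
        (k : ℚ) / 4 ≤
          ((min ((Finset.univ.filter (fun i => y' i ≠ y'' i)).card)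
              (k - (Finset.univ.filter (fun i => y' i ≠ y'' i)).card) : ℕ) : ℚ)) ∧
      (∀ P P' : (Fin k → Bool) → F, IsPolyDeg d P → IsPolyDeg d P' →
        (T.filter (fun y => P y ≠ P' y)).card ≠ 1) := by
  set r : (Fin k → Bool) → (Fin k → Bool) → Prop :=
    fun x y => k / 4 < min (hammingDist x y) (k - hammingDist x y)
  have : Std.Symm r := ⟨fun x y h => by simpa only [r, hammingDist_comm] using h⟩
  have hbad (x : Fin k → Bool) : #{y | ¬ r x y} ≤ 2 * binomLE k (k / 4) := by
    simpa only [r, not_lt, Fintype.card_fin] using card_filter_min_hammingDist_le x (k / 4)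
  have hroom : binomLE k d * (2 * binomLE k (k / 4)) < Fintype.card (Fin k → Bool) := by
    have := one_le_binomLE k (k / 4)
    simp only [Fintype.card_fun, Fintype.card_bool, Fintype.card_fin]
    nlinarith
  obtain ⟨S, hS, hSr⟩ := exists_card_eq_pairwise_of_mul_lt (fun x => by simp [r]) hbad _ hroom
  obtain ⟨T, hTS, hT, c, hc, hcP⟩ :=
    exists_subset_sum_mul_eq_zero_of_isPolyDeg (F := F) (d := d) S (by simp [hS])
  refine ⟨T, hT, (card_le_card hTS).trans hS.le, fun y' hy' y'' hy'' hne => ?_,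
    fun P P' hP hP' => card_filter_ne_ne_one_of_sum_mul_eq hc (by rw [hcP P hP, hcP P' hP'])⟩
  have hfar := cast_div_le_of_div_lt (α := ℚ) (n := 4) (hSr (hTS hy') (hTS hy'') hne)
  rwa [Nat.cast_ofNat] at hfar

open scoped Classical in
/-- Existence of the query set `T`. If
`2·(C(k,≤d)+1)·C(k,≤⌊k/4⌋) ≤ 2^k`, then there is a nonempty `T ⊆ {0,1}^k` with
`|T| ≤ C(k,≤d)+1`, pairwise distances satisfying `min(Δ, k−Δ) ≥ k/4`, and such that no two
degree-`d` multilinear polynomials differ at exactly one point of `T`. -/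
theorem stmt8 (F : Type*) [Field F] (k d : ℕ) (hk : 1 ≤ k)
    (hcond : 2 * (binomLE k d + 1) * binomLE k (k / 4) ≤ 2 ^ k) :
    ∃ T : Finset (Fin k → Bool), T.Nonempty ∧ T.card ≤ binomLE k d + 1 ∧
      (∀ y' ∈ T, ∀ y'' ∈ T, y' ≠ y'' →
        (k : ℚ) / 4 ≤
          ((min ((Finset.univ.filter (fun i => y' i ≠ y'' i)).card)
              (k - (Finset.univ.filter (fun i => y' i ≠ y'' i)).card) : ℕ) : ℚ)) ∧
      (∀ P P' : (Fin k → Bool) → F, IsPolyDeg d P → IsPolyDeg d P' →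
        (T.filter (fun y => P y ≠ P' y)).card ≠ 1) :=
  stmt8_general F k d hcond
end

section
/- Let n ≥ 1, let ρ ∈ [−1, 1], and let A ⊆ {−1, 1}^n with |A| = α · 2^n for some α ∈ [0, 1]. Sample x uniformly from {−1, 1}^n and then sample y ~ N_ρ(x). Then Pr[x ∈ A and y ∈ A] ≤ α^{2/(1+|ρ|)}. -/
/-!
For `0 ≤ ρ ≤ 1`, `p = 1 + ρ` and nonnegative `f, g` on the cube, two-function hypercontractivity
gives `E[f(x) g(y)] ≤ ‖f‖_p ‖g‖_p` for `y ~ N_ρ(x)`. The inequality tensorizes, so it suffices to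
prove it on a single bit. There, writing `u = c (1 + s, 1 - s)` and `v = d (1 + r, 1 - r)`, it
becomes `1 + ρ s r ≤ ‖1 ± s‖_p ‖1 ± r‖_p`, which follows from Cauchy–Schwarz and the two-point
bound `‖1 ± s‖_p ≥ √(1 + (p - 1) s²)`. That bound in turn comes from
`(1 + s)^p + (1 - s)^p ≥ 2 + p (p - 1) s²` (differentiate twice) and Bernoulli's inequality.
Negative `ρ` reduces to `|ρ|` by flipping every bit of `y`. Taking `f = g = 1_A` gives
`Pr[x ∈ A, y ∈ A] ≤ ‖1_A‖_p² = α^(2/(1+|ρ|))`.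
-/

open Real Set Finset

lemma two_le_one_add_rpow_add_one_sub_rpow {θ t : ℝ} (hθ : θ ≤ 0) (ht : |t| < 1) :
    2 ≤ (1 + t) ^ θ + (1 - t) ^ θ := by
  obtain ⟨ht₁, ht₂⟩ := abs_lt.mp ht
  have hprod : 1 ≤ (1 + t) ^ θ * (1 - t) ^ θ := by
    rw [← mul_rpow (by linarith) (by linarith)]
    exact one_le_rpow_of_pos_of_le_one_of_nonpos (by nlinarith) (by nlinarith [sq_nonneg t]) hθ
  nlinarith [sq_nonneg ((1 + t) ^ θ - (1 - t) ^ θ), rpow_nonneg (by linarith : 0 ≤ 1 + t) θ,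
    rpow_nonneg (by linarith : 0 ≤ 1 - t) θ]

lemma hasDerivAt_one_add_rpow (θ : ℝ) {x : ℝ} (hx : -1 < x) :
    HasDerivAt (fun t => (1 + t) ^ θ) (θ * (1 + x) ^ (θ - 1)) x :=
  (((hasDerivAt_id x).const_add 1).rpow_const (Or.inl (by simp; linarith))).congr_deriv
    (by simp)

lemma hasDerivAt_one_sub_rpow (θ : ℝ) {x : ℝ} (hx : x < 1) :
    HasDerivAt (fun t => (1 - t) ^ θ) (-(θ * (1 - x) ^ (θ - 1))) x :=
  (((hasDerivAt_id x).const_sub 1).rpow_const (Or.inl (by simp; linarith))).congr_deriv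
    (by simp)

lemma two_mul_mul_le_one_add_rpow_sub_one_sub_rpow {θ t : ℝ} (hθ₀ : 0 ≤ θ) (hθ₁ : θ ≤ 1)
    (ht : t ∈ Icc (0 : ℝ) 1) : 2 * θ * t ≤ (1 + t) ^ θ - (1 - t) ^ θ := by
  have hcont := continuous_rpow_const hθ₀
  have hmono : MonotoneOn (fun t : ℝ => (1 + t) ^ θ - (1 - t) ^ θ - 2 * θ * t) (Icc 0 1) := by
    refine monotoneOn_of_hasDerivWithinAt_nonneg (convex_Icc 0 1) (by fun_prop)
      (f' := fun x => θ * (1 + x) ^ (θ - 1) - -(θ * (1 - x) ^ (θ - 1)) - 2 * θ) ?_ ?_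
    all_goals rw [interior_Icc]; rintro x ⟨hx₀, hx₁⟩
    · have hlin : HasDerivAt (fun t => 2 * θ * t) (2 * θ) x := by
        simpa using (hasDerivAt_id x).const_mul (2 * θ)
      exact (((hasDerivAt_one_add_rpow θ (by linarith)).sub
        (hasDerivAt_one_sub_rpow θ hx₁)).sub hlin).hasDerivWithinAt
    · have := two_le_one_add_rpow_add_one_sub_rpow (by linarith : θ - 1 ≤ 0)
        (abs_lt.mpr ⟨by linarith, hx₁⟩)
      nlinarith
  simpa using hmono (left_mem_Icc.mpr zero_le_one) ht ht.1

lemma two_add_mul_sq_le_one_add_rpow_add_one_sub_rpow {p s : ℝ} (hp₁ : 1 ≤ p) (hp₂ : p ≤ 2)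
    (hs : s ∈ Icc (0 : ℝ) 1) : 2 + p * (p - 1) * s ^ 2 ≤ (1 + s) ^ p + (1 - s) ^ p := by
  have hcont := continuous_rpow_const (by linarith : 0 ≤ p)
  have hmono : MonotoneOn (fun t : ℝ => (1 + t) ^ p + (1 - t) ^ p - p * (p - 1) * t ^ 2)
      (Icc 0 1) := by
    refine monotoneOn_of_hasDerivWithinAt_nonneg (convex_Icc 0 1) (by fun_prop)
      (f' := fun x => p * (1 + x) ^ (p - 1) + -(p * (1 - x) ^ (p - 1)) - p * (p - 1) * (2 * x))
      ?_ ?_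
    all_goals rw [interior_Icc]; rintro x ⟨hx₀, hx₁⟩
    · have hquad : HasDerivAt (fun t => p * (p - 1) * t ^ 2) (p * (p - 1) * (2 * x)) x := by
        simpa using (hasDerivAt_pow 2 x).const_mul (p * (p - 1))
      exact (((hasDerivAt_one_add_rpow p (by linarith)).add
        (hasDerivAt_one_sub_rpow p hx₁)).sub hquad).hasDerivWithinAt
    · have := two_mul_mul_le_one_add_rpow_sub_one_sub_rpow (by linarith : 0 ≤ p - 1)
        (by linarith) ⟨hx₀.le, hx₁.le⟩
      nlinarith
  have := hmono (left_mem_Icc.mpr zero_le_one) hs hs.1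
  norm_num at this
  linarith

lemma sqrt_le_rpow_mean_one_add_one_sub {p s : ℝ} (hp₁ : 1 ≤ p) (hp₂ : p ≤ 2) (hs : |s| ≤ 1) :
    √(1 + (p - 1) * s ^ 2) ≤ (((1 + s) ^ p + (1 - s) ^ p) / 2) ^ p⁻¹ := by
  wlog hs₀ : 0 ≤ s generalizing s
  · have := this (s := -s) (by rwa [abs_neg]) (by linarith)
    rwa [neg_sq, sub_neg_eq_add, ← sub_eq_add_neg, add_comm ((1 - s) ^ p)] at this
  have hbernoulli : (1 + (p - 1) * s ^ 2) ^ (p / 2) ≤ 1 + p / 2 * ((p - 1) * s ^ 2) :=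
    rpow_one_add_le_one_add_mul_self (by nlinarith) (by linarith) (by linarith)
  have := two_add_mul_sq_le_one_add_rpow_add_one_sub_rpow hp₁ hp₂ ⟨hs₀, (abs_le.mp hs).2⟩
  calc √(1 + (p - 1) * s ^ 2) = ((1 + (p - 1) * s ^ 2) ^ (p / 2)) ^ p⁻¹ := by
        rw [← rpow_mul (by nlinarith), sqrt_eq_rpow]; field_simp
    _ ≤ (((1 + s) ^ p + (1 - s) ^ p) / 2) ^ p⁻¹ :=
        rpow_le_rpow (by positivity) (by linarith) (by positivity)

lemma one_add_mul_mul_le_sqrt_mul_sqrt {a : ℝ} (ha : 0 ≤ a) (s r : ℝ) :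
    1 + a * s * r ≤ √(1 + a * s ^ 2) * √(1 + a * r ^ 2) := by
  rw [← sqrt_mul (by positivity)]
  refine (le_abs_self _).trans (abs_le_sqrt ?_)
  nlinarith [mul_nonneg ha (sq_nonneg (s - r))]

lemma exists_eq_mul_one_add_and_eq_mul_one_sub {a b : ℝ} (ha : 0 ≤ a) (hb : 0 ≤ b) :
    ∃ c s, 0 ≤ c ∧ |s| ≤ 1 ∧ a = c * (1 + s) ∧ b = c * (1 - s) := by
  rcases (add_nonneg ha hb).eq_or_lt with h | h
  · exact ⟨0, 0, le_rfl, by simp, by linarith, by linarith⟩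
  refine ⟨(a + b) / 2, (a - b) / (a + b), by positivity, ?_, ?_, ?_⟩
  · rw [abs_div, abs_of_pos h]
    exact div_le_one_of_le₀ (abs_sub_le_iff.mpr ⟨by linarith, by linarith⟩) h.le
  all_goals field_simp; ring

lemma rpow_mean_const_mul {p c x y : ℝ} (hp : p ≠ 0) (hc : 0 ≤ c) (hx : 0 ≤ x) (hy : 0 ≤ y) :
    (((c * x) ^ p + (c * y) ^ p) / 2) ^ p⁻¹ = c * ((x ^ p + y ^ p) / 2) ^ p⁻¹ := by
  rw [mul_rpow hc hx, mul_rpow hc hy, ← mul_add, mul_div_assoc,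
    mul_rpow (by positivity) (by positivity), ← rpow_mul hc, mul_inv_cancel₀ hp, rpow_one]

noncomputable section

def bitNoise (ρ : ℝ) (b c : Bool) : ℝ := if b = c then (1 + ρ) / 2 else (1 - ρ) / 2

/-- The probability of `y` under `N_ρ(x)`. -/
def noiseKernel {ι : Type*} [Fintype ι] (ρ : ℝ) (x y : ι → Bool) : ℝ :=
  ∏ i, bitNoise ρ (x i) (y i)

/-- `‖f‖_p` for the uniform probability measure on `α`; meaningful only for `0 ≤ f`. -/
def lpMeanNorm {α : Type*} [Fintype α] (p : ℝ) (f : α → ℝ) : ℝ :=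
  ((∑ x, f x ^ p) / Fintype.card α) ^ p⁻¹

end

lemma bitNoise_nonneg {ρ : ℝ} (hρ : ρ ∈ Icc (-1 : ℝ) 1) (b c : Bool) : 0 ≤ bitNoise ρ b c := by
  unfold bitNoise; split_ifs <;> linarith [hρ.1, hρ.2]

lemma bitNoise_not_right (ρ : ℝ) (b c : Bool) : bitNoise ρ b (!c) = bitNoise (-ρ) b c := by
  cases b <;> cases c <;> simp [bitNoise] <;> ring

lemma noiseKernel_not_right {ι : Type*} [Fintype ι] (ρ : ℝ) (x y : ι → Bool) :
    noiseKernel ρ x (fun i => !y i) = noiseKernel (-ρ) x y :=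
  prod_congr rfl fun i _ => bitNoise_not_right ρ (x i) (y i)

lemma noiseKernel_cons {n : ℕ} (ρ : ℝ) (b c : Bool) (x y : Fin n → Bool) :
    noiseKernel ρ (Fin.cons b x : Fin (n + 1) → Bool) (Fin.cons c y) =
      bitNoise ρ b c * noiseKernel ρ x y := by
  simp [noiseKernel, Fin.prod_univ_succ]

lemma sum_pi_fin_succ {α M : Type*} [Fintype α] [AddCommMonoid M] {n : ℕ}
    (F : (Fin (n + 1) → α) → M) : ∑ x, F x = ∑ a, ∑ x, F (Fin.cons a x) := by
  rw [← (Fin.consEquiv fun _ => α).sum_comp, Fintype.sum_prod_type]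
  rfl

section lpMeanNorm

variable {α : Type*} [Fintype α] {p : ℝ} {f : α → ℝ}

lemma lpMeanNorm_nonneg (hf : 0 ≤ f) : 0 ≤ lpMeanNorm p f :=
  rpow_nonneg (div_nonneg (sum_nonneg fun x _ => rpow_nonneg (hf x) p) (by positivity)) _

lemma lpMeanNorm_rpow (hp : p ≠ 0) (hf : 0 ≤ f) :
    lpMeanNorm p f ^ p = (∑ x, f x ^ p) / Fintype.card α :=
  rpow_inv_rpow (div_nonneg (sum_nonneg fun x _ => rpow_nonneg (hf x) p) (by positivity)) hp

lemma lpMeanNorm_bool (p : ℝ) (u : Bool → ℝ) :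
    lpMeanNorm p u = ((u true ^ p + u false ^ p) / 2) ^ p⁻¹ := by
  simp [lpMeanNorm]

lemma lpMeanNorm_comp_equiv (p : ℝ) (f : α → ℝ) (e : α ≃ α) :
    lpMeanNorm p (f ∘ e) = lpMeanNorm p f := by
  simp only [lpMeanNorm, Function.comp_apply, e.sum_comp (fun x => f x ^ p)]

lemma lpMeanNorm_indicator [DecidableEq α] (hp : p ≠ 0) (A : Finset α) :
    lpMeanNorm p (fun x => if x ∈ A then 1 else 0) = (#A / Fintype.card α : ℝ) ^ p⁻¹ := by
  have h01 (x : α) : (if x ∈ A then (1 : ℝ) else 0) ^ p = if x ∈ A then 1 else 0 := by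
    split_ifs <;> simp [zero_rpow hp]
  simp [lpMeanNorm, h01]

lemma lpMeanNorm_pi_fin_succ [Nonempty α] {n : ℕ} (hp : p ≠ 0) {f : (Fin (n + 1) → α) → ℝ}
    (hf : 0 ≤ f) :
    lpMeanNorm p f = lpMeanNorm p (fun a => lpMeanNorm p (fun x => f (Fin.cons a x))) := by
  conv_rhs => rw [lpMeanNorm]
  have hslice (a : α) := lpMeanNorm_rpow hp (f := fun x : Fin n → α => f (Fin.cons a x))
    (fun x => hf _)
  simp_rw [hslice]
  rw [← sum_div, ← sum_pi_fin_succ fun x => f x ^ p]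
  simp [lpMeanNorm, pow_succ, div_div, mul_comm]

end lpMeanNorm

lemma sum_sum_bitNoise_mul_le {ρ : ℝ} (hρ₀ : 0 ≤ ρ) (hρ₁ : ρ ≤ 1) {u v : Bool → ℝ}
    (hu : 0 ≤ u) (hv : 0 ≤ v) :
    ∑ b, ∑ c, bitNoise ρ b c * (u b * v c) ≤
      2 * lpMeanNorm (1 + ρ) u * lpMeanNorm (1 + ρ) v := by
  obtain ⟨c, s, hc, hs, hu₁, hu₀⟩ := exists_eq_mul_one_add_and_eq_mul_one_sub (hu true) (hu false)
  obtain ⟨d, r, hd, hr, hv₁, hv₀⟩ := exists_eq_mul_one_add_and_eq_mul_one_sub (hv true) (hv false)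
  have hsqrt {t : ℝ} (ht : |t| ≤ 1) := add_sub_cancel_left (1 : ℝ) ρ ▸
    sqrt_le_rpow_mean_one_add_one_sub (p := 1 + ρ) (by linarith) (by linarith) ht
  have hcore := (one_add_mul_mul_le_sqrt_mul_sqrt hρ₀ s r).trans
    (mul_le_mul (hsqrt hs) (hsqrt hr) (sqrt_nonneg _) ((sqrt_nonneg _).trans (hsqrt hs)))
  have hp : 1 + ρ ≠ 0 := by linarith
  have hs' := abs_le.mp hs
  have hr' := abs_le.mp hr
  rw [lpMeanNorm_bool, lpMeanNorm_bool, hu₁, hu₀, hv₁, hv₀,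
    rpow_mean_const_mul hp hc (by linarith) (by linarith),
    rpow_mean_const_mul hp hd (by linarith) (by linarith)]
  calc ∑ b, ∑ c', bitNoise ρ b c' * (u b * v c') = 2 * c * d * (1 + ρ * s * r) := by
        simp [bitNoise, hu₁, hu₀, hv₁, hv₀]; ring
    _ ≤ _ := (mul_le_mul_of_nonneg_left hcore (by positivity)).trans_eq (by ring)

theorem sum_sum_mul_noiseKernel_le {ρ : ℝ} (hρ₀ : 0 ≤ ρ) (hρ₁ : ρ ≤ 1) {n : ℕ}
    {f g : (Fin n → Bool) → ℝ} (hf : 0 ≤ f) (hg : 0 ≤ g) :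
    ∑ x, ∑ y, f x * g y * noiseKernel ρ x y ≤
      2 ^ n * lpMeanNorm (1 + ρ) f * lpMeanNorm (1 + ρ) g := by
  have hp : 1 + ρ ≠ 0 := by linarith
  induction n with
  | zero =>
    simp [noiseKernel, lpMeanNorm, rpow_rpow_inv (hf _) hp, rpow_rpow_inv (hg _) hp]
  | succ n ih =>
    set u := fun b => lpMeanNorm (1 + ρ) fun x => f (Fin.cons b x)
    set v := fun c => lpMeanNorm (1 + ρ) fun y => g (Fin.cons c y)
    calc ∑ x, ∑ y, f x * g y * noiseKernel ρ x y
        = ∑ b, ∑ c, bitNoise ρ b c *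
            ∑ x, ∑ y, f (Fin.cons b x) * g (Fin.cons c y) * noiseKernel ρ x y := by
          simp_rw [sum_pi_fin_succ (n := n), noiseKernel_cons, mul_sum]
          refine sum_congr rfl fun b _ => sum_comm.trans (sum_congr rfl fun c _ => ?_)
          exact sum_congr rfl fun x _ => sum_congr rfl fun y _ => by ring
      _ ≤ ∑ b, ∑ c, bitNoise ρ b c * (2 ^ n * (u b * v c)) := by
          gcongr with b _ c _
          · exact bitNoise_nonneg ⟨by linarith, hρ₁⟩ b c
          · rw [← mul_assoc]; exact ih (fun x => hf _) (fun y => hg _)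
      _ = 2 ^ n * ∑ b, ∑ c, bitNoise ρ b c * (u b * v c) := by
          simp_rw [mul_sum]; ring_nf
      _ ≤ 2 ^ n * (2 * lpMeanNorm (1 + ρ) u * lpMeanNorm (1 + ρ) v) := by
          gcongr
          exact sum_sum_bitNoise_mul_le hρ₀ hρ₁ (fun b => lpMeanNorm_nonneg fun x => hf _)
            (fun c => lpMeanNorm_nonneg fun y => hg _)
      _ = 2 ^ (n + 1) * lpMeanNorm (1 + ρ) f * lpMeanNorm (1 + ρ) g := by
          rw [lpMeanNorm_pi_fin_succ hp hf, lpMeanNorm_pi_fin_succ hp hg]; ring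

theorem sum_sum_mul_noiseKernel_le_abs {ρ : ℝ} (hρ : ρ ∈ Icc (-1 : ℝ) 1) {n : ℕ}
    {f g : (Fin n → Bool) → ℝ} (hf : 0 ≤ f) (hg : 0 ≤ g) :
    ∑ x, ∑ y, f x * g y * noiseKernel ρ x y ≤
      2 ^ n * lpMeanNorm (1 + |ρ|) f * lpMeanNorm (1 + |ρ|) g := by
  obtain ⟨hρ₁, hρ₂⟩ := hρ
  rcases le_total 0 ρ with hρ₀ | hρ₀
  · rw [abs_of_nonneg hρ₀]
    exact sum_sum_mul_noiseKernel_le hρ₀ hρ₂ hf hg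
  · let flip : (Fin n → Bool) ≃ (Fin n → Bool) := .piCongrRight fun _ => Equiv.boolNot
    rw [abs_of_nonpos hρ₀, ← lpMeanNorm_comp_equiv _ g flip]
    calc ∑ x, ∑ y, f x * g y * noiseKernel ρ x y
        = ∑ x, ∑ y, f x * (g ∘ flip) y * noiseKernel (-ρ) x y := by
          refine sum_congr rfl fun x _ => ?_
          rw [← flip.sum_comp]
          exact sum_congr rfl fun y _ => by rw [Function.comp_apply, ← noiseKernel_not_right]; rfl
      _ ≤ _ := sum_sum_mul_noiseKernel_le (by linarith) (by linarith) hf fun y => hg (flip y)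

theorem sum_sum_noiseKernel_le {ρ : ℝ} (hρ : ρ ∈ Icc (-1 : ℝ) 1) {n : ℕ}
    (A B : Finset (Fin n → Bool)) :
    ∑ x ∈ A, ∑ y ∈ B, noiseKernel ρ x y ≤
      2 ^ n * (#A / 2 ^ n : ℝ) ^ (1 + |ρ|)⁻¹ * (#B / 2 ^ n : ℝ) ^ (1 + |ρ|)⁻¹ := by
  have hp : 1 + |ρ| ≠ 0 := by positivity
  have h := sum_sum_mul_noiseKernel_le_abs hρ (f := fun x => if x ∈ A then 1 else 0)
    (g := fun y => if y ∈ B then 1 else 0) (fun x => by positivity) (fun y => by positivity)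
  simpa [lpMeanNorm_indicator hp, ite_mul, sum_ite_mem] using h

theorem stmt11_general (n : ℕ) (ρ : ℝ) (hρ : ρ ∈ Set.Icc (-1 : ℝ) 1)
    (A : Finset (Fin n → Bool)) (α : ℝ)
    (hcard : (A.card : ℝ) = α * 2 ^ n) :
    (∑ x ∈ A, ∑ y ∈ A, ∏ i : Fin n,
        (if x i = y i then (1 + ρ) / 2 else (1 - ρ) / 2)) / 2 ^ n
      ≤ α ^ ((2 : ℝ) / (1 + |ρ|)) := by
  have hα : (#A / 2 ^ n : ℝ) = α := by rw [hcard]; field_simp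
  have hα₀ : 0 ≤ α := hα ▸ by positivity
  have h := sum_sum_noiseKernel_le hρ A A
  rw [hα, mul_assoc, ← rpow_add' hα₀ (by positivity), ← two_mul, ← div_eq_mul_inv] at h
  rw [div_le_iff₀ (by positivity), mul_comm]
  exact h

/-- Small-set expansion of the ρ-noisy hypercube. Let `A ⊆ {0,1}^n` with
`|A| = α·2^n`, `α ∈ [0,1]`, and `ρ ∈ [−1,1]`. Sampling `x` uniformly and `y ~ N_ρ(x)`
(independently in each coordinate, `y_i = x_i` with probability `(1+ρ)/2` and `y_i = ¬x_i`
with probability `(1−ρ)/2`), we have `Pr[x ∈ A ∧ y ∈ A] ≤ α^{2/(1+|ρ|)}`. The probability is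
written out as the explicit weighted sum over pairs of points of `A`. -/
theorem stmt11 (n : ℕ) (hn : 1 ≤ n) (ρ : ℝ) (hρ : ρ ∈ Set.Icc (-1 : ℝ) 1)
    (A : Finset (Fin n → Bool)) (α : ℝ) (hα : α ∈ Set.Icc (0 : ℝ) 1)
    (hcard : (A.card : ℝ) = α * 2 ^ n) :
    (∑ x ∈ A, ∑ y ∈ A, ∏ i : Fin n,
        (if x i = y i then (1 + ρ) / 2 else (1 - ρ) / 2)) / 2 ^ n
      ≤ α ^ ((2 : ℝ) / (1 + |ρ|)) :=
  stmt11_general n ρ hρ A α hcard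
end

section
/- Let F be a field, let N, K ≥ 1 be integers, let G be an N×K matrix over F, and let C = { G·w : w ∈ F^K } ⊆ F^N. For v ∈ F^N let Z(v) = { i ∈ [N] : v_i = 0 } be its zero set. Then the number of distinct sets in { Z(v) : v ∈ C } is at most C(N, ≤K) = Σ_{i=0}^{K} C(N, i). -/
private lemma dot_span_aux {F : Type*} [Field F] {K : ℕ} (w : Fin K → F)
    (A : Set (Fin K → F)) (h : ∀ v ∈ A, dotProduct v w = 0) :
    ∀ v ∈ Submodule.span F A, dotProduct v w = 0 := by
  intro v hv
  induction hv using Submodule.span_induction with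
  | mem x hx => exact h x hx
  | zero => simp
  | add x y _ _ hx hy => rw [add_dotProduct, hx, hy, add_zero]
  | smul c x _ hx => rw [smul_dotProduct, hx, smul_zero]

/-- Counting zero-sets of a linear code. Let `C = {G·w : w ∈ F^K} ⊆ F^N`
be the image of an `N×K` matrix `G` over a field `F`. Then the number of distinct zero-sets
`Z(v) = {i : v_i = 0}` of codewords `v ∈ C` is at most `C(N, ≤K) = Σ_{i=0}^K C(N, i)`. -/
theorem stmt13 (F : Type*) [Field F] (N K : ℕ) (hN : 1 ≤ N) (hK : 1 ≤ K)
    (G : Matrix (Fin N) (Fin K) F) :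
    Set.ncard { Z : Set (Fin N) | ∃ w : Fin K → F, Z = { i : Fin N | G.mulVec w i = 0 } }
      ≤ ∑ i ∈ Finset.range (K + 1), N.choose i := by
  classical
  haveI : Nonempty (Fin N) := ⟨⟨0, hN⟩⟩
  set r : Fin N → (Fin K → F) := fun i => G i with hr
  have hmul : ∀ (w : Fin K → F) (i : Fin N), G.mulVec w i = dotProduct (r i) w :=
    fun w i => rfl
  -- the "perp" of a set of indices
  set W : Set (Fin N) → Set (Fin K → F) :=
    fun Z => {w | ∀ i ∈ Z, dotProduct (r i) w = 0} with hW
  -- W only depends on the span of the rows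
  have hWspan : ∀ Z : Set (Fin N),
      W Z = {w | ∀ v ∈ Submodule.span F (r '' Z), dotProduct v w = 0} := by
    intro Z
    ext w
    constructor
    · intro hw v hv
      exact dot_span_aux w _ (by rintro v ⟨i, hi, rfl⟩; exact hw i hi) v hv
    · intro hw i hi
      exact hw (r i) (Submodule.subset_span ⟨i, hi, rfl⟩)
  have hWeq : ∀ Z₁ Z₂ : Set (Fin N),
      Submodule.span F (r '' Z₁) = Submodule.span F (r '' Z₂) → W Z₁ = W Z₂ := by
    intro Z₁ Z₂ h
    rw [hWspan, hWspan, h]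
  -- choose a small finset with the same row span
  have hexists : ∀ Z : Set (Fin N), ∃ T : Finset (Fin N),
      T.card ≤ K ∧ Submodule.span F (r '' ↑T) = Submodule.span F (r '' Z) := by
    intro Z
    obtain ⟨b, hbs, hspan, hli⟩ := exists_linearIndependent F (r '' Z)
    have hfin : b.Finite := hli.setFinite
    haveI := hfin.fintype
    have hcard : b.toFinset.card ≤ K := by
      have h1 := finrank_span_set_eq_card (R := F) hli
      have h2 : Module.finrank F (Submodule.span F b) ≤ Module.finrank F (Fin K → F) :=
        (Submodule.span F b).finrank_le
      simp only [Module.finrank_fintype_fun_eq_card, Fintype.card_fin] at h2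
      omega
    have h1 : ∀ x : Fin K → F, ∃ i : Fin N, x ∈ b → (i ∈ Z ∧ r i = x) := by
      intro x
      by_cases hx : x ∈ b
      · obtain ⟨i, hi, hix⟩ := hbs hx
        exact ⟨i, fun _ => ⟨hi, hix⟩⟩
      · exact ⟨Classical.arbitrary _, fun h => absurd h hx⟩
    choose g hg using h1
    refine ⟨b.toFinset.image g, le_trans (Finset.card_image_le) (by simpa using hcard), ?_⟩
    have himg : r '' ↑(b.toFinset.image g) = b := by
      ext x
      constructor
      · rintro ⟨i, hi, rfl⟩
        simp only [Finset.coe_image, Set.mem_image, Finset.mem_coe, Set.mem_toFinset] at hi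
        obtain ⟨y, hy, rfl⟩ := hi
        rw [(hg y hy).2]; exact hy
      · intro hx
        exact ⟨g x, by simp only [Finset.coe_image, Set.mem_image, Finset.mem_coe,
          Set.mem_toFinset]; exact ⟨x, hx, rfl⟩, (hg x hx).2⟩
    rw [himg, hspan]
  choose T hTcard hTspan using hexists
  -- injectivity on the set of achievable zero-sets
  set S := { Z : Set (Fin N) | ∃ w : Fin K → F, Z = { i : Fin N | G.mulVec w i = 0 } } with hS
  have hrecover : ∀ Z ∈ S, Z = {i : Fin N | ∀ w ∈ W Z, dotProduct (r i) w = 0} := by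
    rintro Z ⟨w₀, rfl⟩
    ext i
    constructor
    · intro hi w hw
      exact hw i hi
    · intro hi
      have hw₀ : w₀ ∈ W {i | G.mulVec w₀ i = 0} := fun j hj => by
        rw [← hmul]; exact hj
      have := hi w₀ hw₀
      rw [← hmul] at this
      exact this
  have hinj : Set.InjOn T S := by
    intro Z₁ h₁ Z₂ h₂ hT
    have hsp : Submodule.span F (r '' Z₁) = Submodule.span F (r '' Z₂) := by
      rw [← hTspan Z₁, hT, hTspan Z₂]
    have hWW : W Z₁ = W Z₂ := hWeq _ _ hsp
    rw [hrecover Z₁ h₁, hrecover Z₂ h₂, hWW]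
  -- count
  have hmaps : ∀ Z ∈ S, T Z ∈ {T : Finset (Fin N) | T.card ≤ K} := fun Z _ => hTcard Z
  have hBfin : {T : Finset (Fin N) | T.card ≤ K}.Finite := Set.toFinite _
  have hle := Set.ncard_le_ncard_of_injOn T hmaps hinj hBfin
  refine le_trans hle ?_
  have : {T : Finset (Fin N) | T.card ≤ K} =
      ↑(Finset.univ.filter fun T : Finset (Fin N) => T.card ≤ K) := by
    ext T; simp
  rw [this, Set.ncard_coe_finset]
  have hun : (Finset.univ.filter fun T : Finset (Fin N) => T.card ≤ K) =
      (Finset.range (K + 1)).biUnion (fun i => Finset.powersetCard i Finset.univ) := by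
    ext T
    simp [Finset.mem_powersetCard, Nat.lt_succ_iff, eq_comm]
  rw [hun, Finset.card_biUnion]
  · apply le_of_eq
    refine Finset.sum_congr rfl fun i _ => ?_
    rw [Finset.card_powersetCard, Finset.card_univ, Fintype.card_fin]
  · intro i _ j _ hij
    simp only [Finset.disjoint_left, Finset.mem_powersetCard]
    rintro T ⟨-, rfl⟩ ⟨-, h⟩
    exact hij h
end

section
/- There is an absolute constant c such that the following holds. Let F be a field, let N ≥ 2, K ≥ 1, D ≥ 1 be integers, let G be an N×K matrix over F, and let C = { G·w : w ∈ F^K } ⊆ F^N be a linear code in which every nonzero codeword has at least D nonzero coordinates. Let m ≥ c · (N/D) · K · log N, and sample S = (s_1, …, s_m) with each s_j independent and uniform in [N]. Then Pr_S[ there exist v_1 ≠ v_2 ∈ C with δ_S(v_1, v_2) ≤ D/(2N) ] ≤ 1/100, where δ_S(v_1, v_2) = |{ j ∈ [m] : v_1(s_j) ≠ v_2(s_j) }| / m. -/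
/-!
Union bound over supports. The support of a codeword `G w` is determined by at most `K` of its
zeros (its zero set imposes at most `K` independent linear conditions on `w`), so the supports of
nonzero codewords, each of size at least `D`, number at most `N ^ (2K)`. For a fixed support `T`,
weighting each sample in `T` by `1/2` bounds the probability that at most `t` samples land in `T`
by `2 ^ t (1 - |T|/(2N)) ^ m`. With `t = pm`, `p = D/(2N)`, the total is at most
`exp (2 K log N - (1 - log 2) p m)`, which is tiny once `p m ≥ 50 K log N`.
-/

universe u

open Finset Module Matrix

theorem Module.Dual.exists_finset_card_le_finrank_forall_eq_zero {F V ι : Type*} [Field F]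
    [AddCommGroup V] [Module F V] [FiniteDimensional F V] (f : ι → Dual F V) (s : Set ι) :
    ∃ B : Finset ι, ↑B ⊆ s ∧ #B ≤ finrank F V ∧
      ∀ x, (∀ i ∈ B, f i x = 0) → ∀ i ∈ s, f i x = 0 := by
  classical
  obtain ⟨κ, a, -, hspan, hli⟩ := exists_linearIndependent' F (fun i : s => f i)
  have := hli.finite
  have := Fintype.ofFinite κ
  refine ⟨univ.image (fun k => (a k : ι)), ?_, ?_, fun x hB i hi => ?_⟩
  · simp [Set.subset_def]
  · calc #(univ.image fun k => (a k : ι)) ≤ Fintype.card κ := card_image_le.trans_eq card_univ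
      _ ≤ finrank F (Dual F V) := hli.fintype_card_le_finrank
      _ = finrank F V := Subspace.dual_finrank_eq
  · have hker :
        Submodule.span F (Set.range fun i : s => f i) ≤ LinearMap.ker (Dual.eval F V x) := by
      rw [← hspan, Submodule.span_le]
      rintro _ ⟨k, rfl⟩
      exact hB _ (mem_image_of_mem _ (mem_univ k))
    exact hker (Submodule.subset_span ⟨⟨i, hi⟩, rfl⟩)

theorem card_filter_card_filter_mem_le {ι : Type*} [Fintype ι] [DecidableEq ι] (m : ℕ)
    (T : Finset ι) {a : ℝ} (ha₀ : 0 < a) (ha₁ : a ≤ 1) (t : ℝ) :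
    (#{S : Fin m → ι | (#{j | S j ∈ T} : ℝ) ≤ t} : ℝ) ≤
      a⁻¹ ^ t * (Fintype.card ι - (1 - a) * #T) ^ m := by
  set g : ι → ℝ := fun i => if i ∈ T then a else 1
  have hprod : ∀ S : Fin m → ι, ∏ j, g (S j) = a ^ #{j | S j ∈ T} := by
    intro S
    simp [g, prod_ite]
  have hsum : ∑ i, g i = Fintype.card ι - (1 - a) * #T := by
    simp only [g, sum_ite, subset_univ, filter_mem_eq_of_subset, sum_const, nsmul_eq_mul,
      filter_not, card_sdiff_of_subset, card_univ, Nat.cast_sub (card_le_univ T), mul_one]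
    ring
  calc (#{S : Fin m → ι | (#{j | S j ∈ T} : ℝ) ≤ t} : ℝ)
      = ∑ S : Fin m → ι with (#{j | S j ∈ T} : ℝ) ≤ t, 1 := by simp
    _ ≤ ∑ S : Fin m → ι with (#{j | S j ∈ T} : ℝ) ≤ t, a⁻¹ ^ t * ∏ j, g (S j) := by
      refine sum_le_sum fun S hS => ?_
      rw [hprod, ← Real.rpow_natCast]
      calc 1 = a⁻¹ ^ t * a ^ t := by
            rw [Real.inv_rpow ha₀.le, inv_mul_cancel₀ (Real.rpow_pos_of_pos ha₀ t).ne']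
        _ ≤ a⁻¹ ^ t * a ^ (#{j | S j ∈ T} : ℝ) := by
            have := Real.rpow_le_rpow_of_exponent_ge ha₀ ha₁ (mem_filter.1 hS).2
            gcongr
    _ ≤ ∑ S : Fin m → ι, a⁻¹ ^ t * ∏ j, g (S j) := by
      refine sum_le_sum_of_subset_of_nonneg (filter_subset _ _) fun S _ _ => ?_
      rw [hprod]; positivity
    _ = a⁻¹ ^ t * (Fintype.card ι - (1 - a) * #T) ^ m := by
      rw [← mul_sum, ← hsum, Fintype.sum_pow]

theorem card_filter_card_le_le_pow {ι : Type*} [Fintype ι] (hι : 2 ≤ Fintype.card ι) (K : ℕ) :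
    #{B : Finset ι | #B ≤ K} ≤ Fintype.card ι ^ (2 * K) := by
  classical
  set N := Fintype.card ι
  have hsub :
      ({B : Finset ι | #B ≤ K} : Finset _) ⊆ (range (K + 1)).biUnion (powersetCard · univ) :=
    fun B hB => mem_biUnion.2
      ⟨#B, mem_range.2 (Nat.lt_succ_of_le (mem_filter.1 hB).2), mem_powersetCard_univ.2 rfl⟩
  calc #{B : Finset ι | #B ≤ K}
      ≤ ∑ i ∈ range (K + 1), #(powersetCard i (univ : Finset ι)) :=
        (card_le_card hsub).trans card_biUnion_le
    _ ≤ ∑ _i ∈ range (K + 1), N ^ K := by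
        refine sum_le_sum fun i hi => ?_
        rw [card_powersetCard, card_univ]
        exact (Nat.choose_le_pow N i).trans
          (Nat.pow_le_pow_right (by omega) (Nat.lt_succ_iff.1 (mem_range.1 hi)))
    _ = (K + 1) * N ^ K := by rw [sum_const, card_range, smul_eq_mul]
    _ ≤ N ^ K * N ^ K := by
        gcongr
        exact (Nat.lt_two_pow_self).trans_le (Nat.pow_le_pow_left hι K)
    _ = N ^ (2 * K) := by ring

open Real in
theorem pow_mul_two_rpow_mul_one_sub_pow_le {N K m : ℕ} {p : ℝ} (hN : 2 ≤ N) (hK : 1 ≤ K)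
    (hp₁ : p ≤ 1) (hpm : 50 * (K * log N) ≤ p * m) :
    (N : ℝ) ^ (2 * K) * (2 ^ (p * m) * (1 - p) ^ m) ≤ 1 / 100 := by
  set L := K * log N
  have hL : log 2 ≤ L := by
    have : log 2 ≤ log N := log_le_log (by norm_num) (by exact_mod_cast hN)
    have : (1 : ℝ) ≤ K := by exact_mod_cast hK
    nlinarith [log_pos (by norm_num : (1 : ℝ) < 2)]
  have hlog100 : log 100 ≤ 13 * log 2 := by
    calc log 100 ≤ log (2 ^ 13) := log_le_log (by norm_num) (by norm_num)
      _ = 13 * log 2 := by rw [log_pow]; norm_num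
  -- `50 (1 - log 2) > 15`, so the exponent is at most `-13 L ≤ -13 log 2`
  have hexp : 2 * L + log 2 * (p * m) - p * m ≤ -log 100 := by
    have h₁ := mul_le_mul_of_nonneg_right hpm (by linarith [log_two_lt_d9] : 0 ≤ 1 - log 2)
    have h₂ := mul_le_mul_of_nonneg_left log_two_lt_d9.le ((log_pos one_lt_two).le.trans hL)
    linarith [log_pos one_lt_two]
  calc (N : ℝ) ^ (2 * K) * (2 ^ (p * m) * (1 - p) ^ m)
      ≤ exp (2 * L) * (exp (log 2 * (p * m)) * exp (-p) ^ m) := by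
        rw [← rpow_def_of_pos two_pos, show 2 * L = log ((N : ℝ) ^ (2 * K)) by rw [log_pow]; push_cast; ring,
          exp_log (by positivity)]
        gcongr
        linarith [add_one_le_exp (-p)]
    _ = exp (2 * L + log 2 * (p * m) - p * m) := by
        rw [← exp_nat_mul, ← exp_add, ← exp_add]; ring_nf
    _ ≤ exp (-log 100) := exp_le_exp.2 hexp
    _ = 1 / 100 := by rw [exp_neg, exp_log (by norm_num), one_div]

section Code

variable {F ι κ : Type*} [Field F] [Fintype ι] [Fintype κ]

open scoped Classical

noncomputable def Matrix.supportVanishingOn (G : Matrix ι κ F) (B : Finset ι) : Finset ι :=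
  {i | ∃ w, (∀ b ∈ B, (G *ᵥ w) b = 0) ∧ (G *ᵥ w) i ≠ 0}

@[simp]
theorem Matrix.mem_supportVanishingOn {G : Matrix ι κ F} {B : Finset ι} {i : ι} :
    i ∈ G.supportVanishingOn B ↔ ∃ w, (∀ b ∈ B, (G *ᵥ w) b = 0) ∧ (G *ᵥ w) i ≠ 0 := by
  simp [supportVanishingOn]

theorem Matrix.exists_supportVanishingOn_eq (G : Matrix ι κ F) (w : κ → F) :
    ∃ B : Finset ι, #B ≤ Fintype.card κ ∧
      G.supportVanishingOn B = ({i | (G *ᵥ w) i ≠ 0} : Finset ι) := by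
  obtain ⟨B, hBw, hcard, hB⟩ := Dual.exists_finset_card_le_finrank_forall_eq_zero
    (fun i => (LinearMap.proj i).comp G.mulVecLin) {i | (G *ᵥ w) i = 0}
  refine ⟨B, hcard.trans_eq (finrank_fintype_fun_eq_card F), ?_⟩
  ext i
  simp only [mem_supportVanishingOn, mem_filter, mem_univ, true_and]
  constructor
  · rintro ⟨w', hw'B, hw'i⟩ hi
    exact hw'i (hB w' hw'B i hi)
  · exact fun hi => ⟨w, fun b hb => hBw hb, hi⟩

theorem Matrix.card_exists_card_ne_le (G : Matrix ι κ F) {D : ℕ}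
    (hdist : ∀ w, G *ᵥ w ≠ 0 → D ≤ #{i | (G *ᵥ w) i ≠ 0}) (hD : D ≤ Fintype.card ι)
    (m : ℕ) (t : ℝ) :
    (#{S : Fin m → ι | ∃ w₁ w₂, G *ᵥ w₁ ≠ G *ᵥ w₂ ∧
        (#{j | (G *ᵥ w₁) (S j) ≠ (G *ᵥ w₂) (S j)} : ℝ) ≤ t} : ℝ) ≤
      #{B : Finset ι | #B ≤ Fintype.card κ} * (2 ^ t * (Fintype.card ι - D / 2) ^ m) := by
  set ℬ : Finset (Finset ι) := {B | #B ≤ Fintype.card κ ∧ D ≤ #(G.supportVanishingOn B)}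
  have hcover : ({S : Fin m → ι | ∃ w₁ w₂, G *ᵥ w₁ ≠ G *ᵥ w₂ ∧
        (#{j | (G *ᵥ w₁) (S j) ≠ (G *ᵥ w₂) (S j)} : ℝ) ≤ t} : Finset (Fin m → ι)) ⊆
      ℬ.biUnion fun B => {S : Fin m → ι | (#{j | S j ∈ G.supportVanishingOn B} : ℝ) ≤ t} := by
    intro S hS
    obtain ⟨w₁, w₂, hne, hS⟩ := (mem_filter.1 hS).2
    have hsub : G *ᵥ (w₁ - w₂) = G *ᵥ w₁ - G *ᵥ w₂ := mulVec_sub G w₁ w₂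
    obtain ⟨B, hB, hBeq⟩ := G.exists_supportVanishingOn_eq (w₁ - w₂)
    refine mem_biUnion.2 ⟨B, mem_filter.2 ⟨mem_univ _, hB, ?_⟩, mem_filter.2 ⟨mem_univ _, ?_⟩⟩
    · rw [hBeq]
      exact hdist _ (by rwa [hsub, sub_ne_zero])
    · simpa [hBeq, hsub, sub_ne_zero] using hS
  have hterm : ∀ B ∈ ℬ, (#{S : Fin m → ι | (#{j | S j ∈ G.supportVanishingOn B} : ℝ) ≤ t} : ℝ) ≤
      2 ^ t * (Fintype.card ι - D / 2) ^ m := by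
    intro B hB
    have hDB : (D : ℝ) ≤ #(G.supportVanishingOn B) := by exact_mod_cast (mem_filter.1 hB).2.2
    have hBι : (#(G.supportVanishingOn B) : ℝ) ≤ Fintype.card ι := by exact_mod_cast card_le_univ _
    refine (card_filter_card_filter_mem_le m _ (a := 1 / 2) (by norm_num) (by norm_num) t).trans ?_
    norm_num
    gcongr
    all_goals linarith
  have hX : (0 : ℝ) ≤ 2 ^ t * (Fintype.card ι - D / 2) ^ m := by
    have : (D : ℝ) ≤ Fintype.card ι := by exact_mod_cast hD
    have : (0 : ℝ) ≤ Fintype.card ι - D / 2 := by linarith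
    positivity
  calc _ ≤ (∑ B ∈ ℬ, #{S : Fin m → ι | (#{j | S j ∈ G.supportVanishingOn B} : ℝ) ≤ t} : ℝ) := by
        exact_mod_cast (card_le_card hcover).trans card_biUnion_le
    _ ≤ ∑ _B ∈ ℬ, (2 : ℝ) ^ t * (Fintype.card ι - D / 2) ^ m := sum_le_sum hterm
    _ = #ℬ * (2 ^ t * (Fintype.card ι - D / 2) ^ m) := by rw [sum_const, nsmul_eq_mul]
    _ ≤ #{B : Finset ι | #B ≤ Fintype.card κ} * (2 ^ t * (Fintype.card ι - D / 2) ^ m) := by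
        gcongr
        intro B hB
        simp only [ℬ, mem_filter] at hB ⊢
        exact ⟨hB.1, hB.2.1⟩

theorem Matrix.card_exists_two_mul_card_ne_le_div_le (G : Matrix ι κ F) {D : ℕ}
    (hdist : ∀ w, G *ᵥ w ≠ 0 → D ≤ #{i | (G *ᵥ w) i ≠ 0}) (hD : D ≤ Fintype.card ι)
    (hι : 2 ≤ Fintype.card ι) (m : ℕ) :
    (#{S : Fin m → ι | ∃ w₁ w₂, G *ᵥ w₁ ≠ G *ᵥ w₂ ∧
        2 * Fintype.card ι * #{j | (G *ᵥ w₁) (S j) ≠ (G *ᵥ w₂) (S j)} ≤ D * m} : ℝ) /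
        ((Fintype.card ι ^ m : ℕ) : ℝ) ≤
      Fintype.card ι ^ (2 * Fintype.card κ) *
        (2 ^ (D / (2 * Fintype.card ι) * m : ℝ) * (1 - D / (2 * Fintype.card ι)) ^ m) := by
  set N := Fintype.card ι
  set p : ℝ := D / (2 * N)
  have hN₀ : (0 : ℝ) < N := by positivity
  have hp₁ : 0 ≤ 1 - p := by
    rw [sub_nonneg, div_le_one (by positivity)]
    have : (D : ℝ) ≤ N := by exact_mod_cast hD
    linarith
  have hsmall : (#{B : Finset ι | #B ≤ Fintype.card κ} : ℝ) ≤ N ^ (2 * Fintype.card κ) := by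
    exact_mod_cast card_filter_card_le_le_pow hι _
  rw [div_le_iff₀ (by positivity)]
  calc _ ≤ (#{S : Fin m → ι | ∃ w₁ w₂, G *ᵥ w₁ ≠ G *ᵥ w₂ ∧
          (#{j | (G *ᵥ w₁) (S j) ≠ (G *ᵥ w₂) (S j)} : ℝ) ≤ p * m} : ℝ) := by
        refine Nat.cast_le.2 (card_le_card (monotone_filter_right _ ?_))
        rintro S - ⟨w₁, w₂, hne, hS⟩
        refine ⟨w₁, w₂, hne, ?_⟩
        have hS' : ((2 * N * #{j | (G *ᵥ w₁) (S j) ≠ (G *ᵥ w₂) (S j)} : ℕ) : ℝ) ≤ (D * m : ℕ) :=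
          Nat.cast_le.2 hS
        push_cast at hS'
        rw [div_mul_eq_mul_div, le_div_iff₀ (by positivity)]
        linarith
    _ ≤ #{B : Finset ι | #B ≤ Fintype.card κ} * (2 ^ (p * m) * (N - D / 2) ^ m) :=
        G.card_exists_card_ne_le hdist hD m (p * m)
    _ = #{B : Finset ι | #B ≤ Fintype.card κ} * (2 ^ (p * m) * (1 - p) ^ m) * N ^ m := by
        rw [show (N : ℝ) - D / 2 = (1 - p) * N by simp only [p]; field_simp, mul_pow]
        ring
    _ ≤ N ^ (2 * Fintype.card κ) * (2 ^ (p * m) * (1 - p) ^ m) * ((N ^ m : ℕ) : ℝ) := by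
        push_cast
        gcongr

end Code

open scoped Classical in
/-- Random samples preserve the distance of a linear code. There is an
absolute constant `c > 0` such that: for every linear code `C = {G·w : w ∈ F^K} ⊆ F^N` in
which every nonzero codeword has at least `D` nonzero coordinates, if
`m ≥ c·(N/D)·K·log N` and `S = (s_1,…,s_m)` consists of independent uniform indices in `[N]`,
then with probability at least `99/100` no two distinct codewords `v₁ ≠ v₂` satisfy
`δ_S(v₁, v₂) ≤ D/(2N)`, where `δ_S(v₁,v₂) = #{j : v₁(s_j) ≠ v₂(s_j)}/m` (the condition
`δ_S(v₁,v₂) ≤ D/(2N)` is written as `2·N·#{j : v₁(s_j) ≠ v₂(s_j)} ≤ D·m`). -/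
theorem stmt14 : ∃ c : ℝ, 0 < c ∧
    ∀ (F : Type u) [Field F], ∀ (N K D : ℕ), 2 ≤ N → 1 ≤ K → 1 ≤ D →
    ∀ G : Matrix (Fin N) (Fin K) F,
    (∀ w : Fin K → F, G.mulVec w ≠ 0 →
      D ≤ (Finset.univ.filter (fun i : Fin N => G.mulVec w i ≠ 0)).card) →
    ∀ m : ℕ, c * ((N : ℝ) / (D : ℝ)) * (K : ℝ) * Real.log N ≤ (m : ℝ) →
    ((Finset.univ.filter (fun S : Fin m → Fin N =>
        ∃ w₁ w₂ : Fin K → F, G.mulVec w₁ ≠ G.mulVec w₂ ∧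
          2 * N * (Finset.univ.filter
            (fun j : Fin m => G.mulVec w₁ (S j) ≠ G.mulVec w₂ (S j))).card ≤ D * m)).card : ℝ)
      / ((N ^ m : ℕ) : ℝ) ≤ 1 / 100 := by
  refine ⟨100, by norm_num, fun F _ N K D hN hK hD G hdist m hm => ?_⟩
  by_cases hC : ∀ w, G *ᵥ w = 0
  · simp [hC]
  obtain ⟨w, hw⟩ := not_forall.1 hC
  have hDN : D ≤ N := (hdist w hw).trans ((card_filter_le _ _).trans_eq (card_fin N))
  have hD₀ : (0 : ℝ) < D := by exact_mod_cast hD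
  set p : ℝ := D / (2 * N)
  have hp₁ : p ≤ 1 := by
    rw [div_le_one (by positivity)]
    have : (D : ℝ) ≤ N := by exact_mod_cast hDN
    linarith
  have hpm : 50 * (K * Real.log N) ≤ p * m := by
    calc 50 * (K * Real.log N) = p * (100 * (N / D) * K * Real.log N) := by
          simp only [p]; field_simp; ring
      _ ≤ p * m := by gcongr
  have hsample := G.card_exists_two_mul_card_ne_le_div_le hdist (by simpa using hDN)
    (by simpa using hN) m
  simp only [Fintype.card_fin] at hsample
  exact hsample.trans (pow_mul_two_rpow_mul_one_sub_pow_le hN hK hp₁ hpm)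
end

section
/- (Gluing, matching case.) Let F be a field, let ℓ ≥ d ≥ 0 be integers, let r ≥ 2ℓ+2 and I = [r]. For each h ∈ [ℓ+1], let P^{(h)} ∈ F(I∖{2h}, d). For a function Q : {0,1}^J → F with 2h ∈ J and 2h−1 ∈ J, define Q|_h : {0,1}^{J∖{2h}} → F by Q|_h(x) = Q(x̃), where x̃ agrees with x on J∖{2h} and x̃_{2h} = x_{2h−1}. Suppose that for all distinct h, h' ∈ [ℓ+1], P^{(h)}|_{h'} = P^{(h')}|_{h} as functions on {0,1}^{I∖{2h, 2h'}}. Then there exists P ∈ F(I, d) such that P|_h = P^{(h)} for every h ∈ [ℓ+1]. -/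
/-- The substitution operator: `(subst j i Q)(x) = Q(x̃)` where `x̃` agrees with `x` except
that `x̃_j = x_i`. A function of the form `subst j i Q` does not depend on coordinate `j`,
so it faithfully represents the restriction of `Q` to `{0,1}^{I∖{j}}` obtained by
identifying `X_j` with `X_i`. -/
def subst {r : ℕ} {F : Type*} (j i : Fin r) (Q : (Fin r → Bool) → F) :
    (Fin r → Bool) → F :=
  fun x => Q (Function.update x j (x i))

/-- For `h ∈ [ℓ+1]` (0-indexed `h : Fin (ℓ+1)`), the pair of indices `{2h−1, 2h}` of the
`h`-th matching edge, 0-indexed as `(2h, 2h+1)`; the first is kept, the second is removed by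
the restriction `Q ↦ Q|_h`. -/
def pairIdx (ℓ r : ℕ) (hr : 2 * ℓ + 2 ≤ r) (h : Fin (ℓ + 1)) : Fin r × Fin r :=
  (⟨2 * h.val, by have := h.isLt; omega⟩, ⟨2 * h.val + 1, by have := h.isLt; omega⟩)

open Finset Function

namespace BoolCube

variable {ι F : Type*} [CommRing F]

def monomial (S : Finset ι) (x : ι → Bool) : F := ∏ k ∈ S, if x k then 1 else 0

lemma monomial_apply (S : Finset ι) (x : ι → Bool) :
    (monomial S x : F) = if ∀ k ∈ S, x k then 1 else 0 :=
  prod_boole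

section SubstSet

variable [DecidableEq ι] (j i : ι)

def substSet (S : Finset ι) : Finset ι := if j ∈ S then insert i (S.erase j) else S

variable {j i} {S T : Finset ι}

lemma substSet_eq_iff (hi : i ∉ T) (hj : j ∉ T) : substSet j i S = T ↔ S = T := by
  unfold substSet
  split_ifs <;> grind

lemma notMem_substSet (hij : i ≠ j) (S : Finset ι) : j ∉ substSet j i S := by
  unfold substSet
  split_ifs <;> grind

lemma subset_insert_of_substSet_eq (h : substSet j i S = T) : S ⊆ insert j T := by
  subst h
  unfold substSet
  split_ifs <;> grind

lemma card_substSet_le (S : Finset ι) : #(substSet j i S) ≤ #S := by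
  unfold substSet
  split_ifs with hjS
  · exact (card_insert_le _ _).trans (card_erase_add_one hjS).le
  · rfl

lemma monomial_update (S : Finset ι) (x : ι → Bool) :
    (monomial S (update x j (x i)) : F) = monomial (substSet j i S) x := by
  simp only [monomial_apply, substSet]
  split_ifs <;> grind

lemma monomial_indicator (S T : Finset ι) :
    (monomial S (fun k => decide (k ∈ T)) : F) = if S ⊆ T then 1 else 0 := by
  simp only [monomial_apply, decide_eq_true_eq]
  rfl

end SubstSet

lemma exists_pair_notMem {κ : Type*} [Fintype κ] {i j : κ → ι}
    (hij : Injective (Sum.elim i j)) {T : Finset ι} (hT : #T < Fintype.card κ) :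
    ∃ k, i k ∉ T ∧ j k ∉ T := by
  classical
  by_contra! h
  let pick : κ → κ ⊕ κ := fun k => if i k ∈ T then .inl k else .inr k
  have hpick : Injective pick := fun a b hab => by
    simp only [pick] at hab
    split_ifs at hab <;> simpa using hab
  refine hT.not_ge (card_le_card_of_injOn (Sum.elim i j ∘ pick) (fun k _ => ?_)
    (hij.comp hpick).injOn)
  by_cases hk : i k ∈ T <;> simp [pick, hk, h k]

variable [Fintype ι]

def HasCoeffs (f : (ι → Bool) → F) (α : Finset ι → F) : Prop :=
  ∀ x, f x = ∑ S, α S * monomial S x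

lemma eq_zero_of_sum_monomial_eq_zero {c : Finset ι → F}
    (hc : ∀ x, ∑ S, c S * monomial S x = 0) : c = 0 := by
  classical
  by_contra hne
  -- Evaluate at the indicator of a support set of minimal size: only `S` itself contributes.
  obtain ⟨S, hS, hmin⟩ := exists_min_image {S | c S ≠ 0} card
    (by simpa [Finset.Nonempty, funext_iff] using hne)
  have hsum : ∑ T, c T * monomial T (fun k => decide (k ∈ S)) = c S := by
    rw [sum_eq_single S]
    · simp [monomial_indicator]
    · intro T _ hTS
      rw [monomial_indicator]
      split_ifs with hsub
      · have hT : c T = 0 := by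
          by_contra hT
          exact (card_lt_card (ssubset_of_subset_of_ne hsub hTS)).not_ge
            (hmin T (by simpa using hT))
        simp [hT]
      · simp
    · simp
  exact (mem_filter.1 hS).2 (hsum ▸ hc _)

lemma HasCoeffs.unique {f : (ι → Bool) → F} {α β : Finset ι → F}
    (hα : HasCoeffs f α) (hβ : HasCoeffs f β) : α = β :=
  sub_eq_zero.1 <| eq_zero_of_sum_monomial_eq_zero fun x => by
    simp only [Pi.sub_apply, sub_mul, sum_sub_distrib, ← hα x, ← hβ x, sub_self]

section SubstCoeffs

variable [DecidableEq ι] (j i : ι)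

def substCoeffs (α : Finset ι → F) (T : Finset ι) : F := ∑ S with substSet j i S = T, α S

variable {j i} {T : Finset ι}

lemma HasCoeffs.subst {f : (ι → Bool) → F} {α : Finset ι → F} (hα : HasCoeffs f α) :
    HasCoeffs (fun x => f (update x j (x i))) (substCoeffs j i α) := by
  intro x
  simp only [hα (update x j (x i)), monomial_update, substCoeffs, sum_mul]
  exact (sum_fiberwise_of_maps_to (fun _ _ => mem_univ _) _).symm.trans
    (sum_congr rfl fun T _ => sum_congr rfl fun S hS => by rw [(mem_filter.1 hS).2])

lemma substCoeffs_of_notMem (α : Finset ι → F) (hi : i ∉ T) (hj : j ∉ T) :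
    substCoeffs j i α T = α T := by
  simp [substCoeffs, substSet_eq_iff hi hj, filter_eq']

lemma substCoeffs_of_mem (hij : i ≠ j) (α : Finset ι → F) (hj : j ∈ T) :
    substCoeffs j i α T = 0 :=
  sum_eq_zero fun S hS => absurd ((mem_filter.1 hS).2 ▸ hj) (notMem_substSet hij S)

lemma substCoeffs_eq_zero_of_lt_card {d : ℕ} {α : Finset ι → F}
    (hα : ∀ S, d < #S → α S = 0) (hT : d < #T) : substCoeffs j i α T = 0 :=
  sum_eq_zero fun S hS =>
    hα S (hT.trans_le ((mem_filter.1 hS).2 ▸ card_substSet_le S))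

lemma substCoeffs_congr {α β : Finset ι → F} (h : ∀ S ⊆ insert j T, α S = β S) :
    substCoeffs j i α T = substCoeffs j i β T :=
  sum_congr rfl fun S hS => h S (subset_insert_of_substSet_eq (mem_filter.1 hS).2)

lemma HasCoeffs.eq_zero_of_update_invariant (hij : i ≠ j) {f : (ι → Bool) → F}
    {α : Finset ι → F} (hα : HasCoeffs f α) (hf : ∀ x, f (update x j (x i)) = f x)
    (hj : j ∈ T) : α T = 0 := by
  have hα' := hα.unique (by simpa only [hf] using hα.subst (j := j) (i := i))
  rw [hα', substCoeffs_of_mem hij _ hj]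

end SubstCoeffs

section Glue

variable [DecidableEq ι] {κ : Type*} [Fintype κ] {i j : κ → ι} {α : κ → Finset ι → F}

variable (i j α) in
noncomputable def glueCoeffs (S : Finset ι) : F :=
  if h : ∃ k, i k ∉ S ∧ j k ∉ S then α h.choose S else 0

variable (hcompat : ∀ k k', k ≠ k' →
  substCoeffs (j k') (i k') (α k) = substCoeffs (j k) (i k) (α k'))
include hcompat

lemma glueCoeffs_eq {k : κ} {S : Finset ι} (hi : i k ∉ S) (hj : j k ∉ S) :
    glueCoeffs i j α S = α k S := by
  have h : ∃ k, i k ∉ S ∧ j k ∉ S := ⟨k, hi, hj⟩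
  obtain ⟨hi', hj'⟩ := h.choose_spec
  rw [glueCoeffs, dif_pos h]
  obtain hk | hk := eq_or_ne h.choose k
  · rw [hk]
  · rw [← substCoeffs_of_notMem (α h.choose) hi hj, hcompat _ _ hk,
      substCoeffs_of_notMem _ hi' hj']

omit hcompat [Fintype ι] in
lemma glueCoeffs_eq_zero_of_lt_card {d : ℕ} (hdeg : ∀ k S, d < #S → α k S = 0)
    (S : Finset ι) (hS : d < #S) : glueCoeffs i j α S = 0 := by
  rw [glueCoeffs]
  split_ifs
  exacts [hdeg _ S hS, rfl]

lemma substCoeffs_glueCoeffs (hij : Injective (Sum.elim i j)) {d : ℕ}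
    (hd : d < Fintype.card κ) (hdeg : ∀ k S, d < #S → α k S = 0)
    (hvanish : ∀ k S, j k ∈ S → α k S = 0) (k : κ) :
    substCoeffs (j k) (i k) (glueCoeffs i j α) = α k := by
  have hne : ∀ k k', i k' ≠ j k := fun k k' h => Sum.inl_ne_inr (hij h)
  funext T
  by_cases hjT : j k ∈ T
  · rw [substCoeffs_of_mem (hne k k) _ hjT, hvanish k T hjT]
  by_cases hiT : i k ∉ T
  · rw [substCoeffs_of_notMem _ hiT hjT, glueCoeffs_eq hcompat hiT hjT]
  by_cases hdT : d < #T
  · rw [substCoeffs_eq_zero_of_lt_card (glueCoeffs_eq_zero_of_lt_card hdeg) hdT, hdeg k T hdT]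
  obtain ⟨k', hi', hj'⟩ := exists_pair_notMem hij ((not_lt.1 hdT).trans_lt hd)
  have hkk' : k ≠ k' := by rintro rfl; exact hiT hi'
  have hjj' : j k' ≠ j k := fun h => hkk' (Sum.inr_injective (hij h)).symm
  -- Every `S` with `substSet (j k) (i k) S = T` lies in `insert (j k) T`, so it avoids pair `k'`.
  calc substCoeffs (j k) (i k) (glueCoeffs i j α) T
      = substCoeffs (j k) (i k) (α k') T := substCoeffs_congr fun S hS =>
        glueCoeffs_eq hcompat (fun h => by grind) (fun h => by grind)
    _ = substCoeffs (j k') (i k') (α k) T := by rw [hcompat k k' hkk']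
    _ = α k T := substCoeffs_of_notMem _ hi' hj'

end Glue

end BoolCube

open BoolCube in
theorem IsPolyDeg.exists_glue {ι F κ : Type*} [Fintype ι] [DecidableEq ι] [Field F]
    [Fintype κ] {d : ℕ} (hd : d < Fintype.card κ) {i j : κ → ι}
    (hij : Injective (Sum.elim i j)) {P : κ → (ι → Bool) → F}
    (hdeg : ∀ k, IsPolyDeg d (P k))
    (hinv : ∀ k x, P k (update x (j k) (x (i k))) = P k x)
    (hcompat : ∀ k k', k ≠ k' →
      (fun x => P k (update x (j k') (x (i k')))) = fun x => P k' (update x (j k) (x (i k)))) :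
    ∃ Q : (ι → Bool) → F, IsPolyDeg d Q ∧
      ∀ k, (fun x => Q (update x (j k) (x (i k)))) = P k := by
  choose α hαdeg hα using hdeg
  replace hα : ∀ k, HasCoeffs (P k) (α k) := hα
  have hcompat' : ∀ k k', k ≠ k' →
      substCoeffs (j k') (i k') (α k) = substCoeffs (j k) (i k) (α k') := fun k k' hkk' =>
    (hα k).subst.unique (hcompat k k' hkk' ▸ (hα k').subst)
  have hvanish : ∀ k S, j k ∈ S → α k S = 0 := fun k _ =>
    (hα k).eq_zero_of_update_invariant (fun h => Sum.inl_ne_inr (hij h)) (hinv k)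
  refine ⟨fun x => ∑ S, glueCoeffs i j α S * monomial S x,
    ⟨_, glueCoeffs_eq_zero_of_lt_card hαdeg, fun _ => rfl⟩, fun k => funext fun x => ?_⟩
  rw [HasCoeffs.subst (fun _ => rfl) x, substCoeffs_glueCoeffs hcompat' hij hd hαdeg hvanish k,
    hα k x]

/-- Gluing, matching case. Let `ℓ ≥ d`, `r ≥ 2ℓ+2`, `I = [r]`, with the
`ℓ+1` disjoint pairs `{2h−1, 2h}`. Suppose each `P⁽ʰ⁾` is a degree-`d` multilinear polynomial
on `{0,1}^{I∖{2h}}` (encoded as a function on the full cube not depending on coordinate `2h`),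
and the restrictions are pairwise consistent: `P⁽ʰ⁾|_{h'} = P⁽ʰ'⁾|_h` for all `h ≠ h'`.
Then there exists a degree-`d` multilinear `P` on `{0,1}^I` with `P|_h = P⁽ʰ⁾` for all `h`. -/
theorem stmt16 (F : Type*) [Field F] (d ℓ r : ℕ) (hdl : d ≤ ℓ) (hr : 2 * ℓ + 2 ≤ r)
    (P : Fin (ℓ + 1) → ((Fin r → Bool) → F))
    (hdeg : ∀ h, IsPolyDeg d (P h))
    (hindep : ∀ h, ∀ x : Fin r → Bool, ∀ b : Bool,
      P h (Function.update x (pairIdx ℓ r hr h).2 b) = P h x)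
    (hcompat : ∀ h h' : Fin (ℓ + 1), h ≠ h' →
      subst (pairIdx ℓ r hr h').2 (pairIdx ℓ r hr h').1 (P h)
        = subst (pairIdx ℓ r hr h).2 (pairIdx ℓ r hr h).1 (P h')) :
    ∃ Q : (Fin r → Bool) → F, IsPolyDeg d Q ∧
      ∀ h, subst (pairIdx ℓ r hr h).2 (pairIdx ℓ r hr h).1 Q = P h := by
  have hinj : Injective
      (Sum.elim (fun h => (pairIdx ℓ r hr h).1) fun h => (pairIdx ℓ r hr h).2) := by
    rintro (a | a) (b | b) hab <;> simp [pairIdx, Fin.ext_iff] at hab <;> grind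
  exact IsPolyDeg.exists_glue (by simpa using Nat.lt_succ_of_le hdl) hinj hdeg
    (fun h x => hindep h x _) hcompat
end

section
/- (Gluing, star case.) Let F be a field, let ℓ ≥ d ≥ 0 be integers, let r ≥ ℓ+2 and I = [r]. For each h ∈ [ℓ+1], let P^{(h)} ∈ F([r−1], d), where [r−1] = I∖{r}. For Q : {0,1}^{[r]} → F and h ∈ [ℓ+1], define Q|_h : {0,1}^{[r−1]} → F by Q|_h(x) = Q(x̃), where x̃ agrees with x on [r−1] and x̃_r = x_h. For Q : {0,1}^{[r−1]} → F and distinct i, j ∈ [ℓ+1], define Q[j:=i] : {0,1}^{[r−1]∖{j}} → F by Q[j:=i](x) = Q(x̃), where x̃ agrees with x on [r−1]∖{j} and x̃_j = x_i. Suppose that for all i < j in [ℓ+1], P^{(i)}[j:=i] = P^{(j)}[j:=i] as functions on {0,1}^{[r−1]∖{j}}. Then there exists P ∈ F([r], d) such that P|_h = P^{(h)} for every h ∈ [ℓ+1]. -/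
/-- The 0-indexed member index `h ∈ [ℓ+1] ⊆ [r−1]` of a star edge `{h, r}`. -/
def memIdx (ℓ r : ℕ) (hr : ℓ + 2 ≤ r) (h : Fin (ℓ + 1)) : Fin r :=
  ⟨h.val, by have := h.isLt; omega⟩

/-- The 0-indexed center index `r` (1-indexed) of the star. -/
def ctrIdx (ℓ r : ℕ) (hr : ℓ + 2 ≤ r) : Fin r :=
  ⟨r - 1, by omega⟩



section Aux


set_option linter.unusedSectionVars false


open Finset


variable {ι : Type*} [Fintype ι] [DecidableEq ι] {F : Type*} [Field F]

/-- characteristic point of a finset -/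
def bpt (W : Finset ι) : ι → Bool := fun i => decide (i ∈ W)

/-- monomial indicator -/
def chi (F : Type*) [Field F] (S : Finset ι) (x : ι → Bool) : F :=
  ∏ i ∈ S, (if x i then (1 : F) else 0)

/-- Möbius coefficient -/
def coefF (F : Type*) [Field F] (f : (ι → Bool) → F) (S : Finset ι) : F :=
  ∑ W ∈ S.powerset, (-1 : F) ^ (S.card + W.card) * f (bpt W)

lemma chi_bpt (S W : Finset ι) : chi F S (bpt W) = if S ⊆ W then 1 else 0 := by
  by_cases h : S ⊆ W
  · rw [if_pos h]
    apply prod_eq_one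
    intro i hi
    simp [bpt, h hi]
  · rw [if_neg h]
    obtain ⟨i, hiS, hiW⟩ := not_subset.1 h
    apply prod_eq_zero hiS
    simp [bpt, hiW]

lemma parity_sum (A : Finset ι) :
    ∑ V ∈ A.powerset, (-1 : F) ^ V.card = if A = ∅ then 1 else 0 := by
  induction A using Finset.induction_on with
  | empty => simp
  | @insert a s ha ih =>
    rw [sum_powerset_insert ha]
    have h2 : ∑ t ∈ s.powerset, (-1 : F) ^ (insert a t).card
        = ∑ t ∈ s.powerset, (-1) * (-1 : F) ^ t.card := by
      apply sum_congr rfl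
      intro t ht
      rw [card_insert_of_notMem (fun hc => ha (mem_powerset.1 ht hc)), pow_succ]
      ring
    rw [h2, ← mul_sum, ih]
    simp
    split <;> ring


open Finset

variable {ι : Type*} [Fintype ι] [DecidableEq ι] {F : Type*} [Field F]

set_option linter.unusedSectionVars false

lemma np {F : Type*} [Field F] (m n : ℕ) (h : m % 2 = n % 2) : (-1 : F) ^ m = (-1 : F) ^ n := by
  conv_lhs => rw [← Nat.div_add_mod m 2]
  conv_rhs => rw [← Nat.div_add_mod n 2]
  rw [pow_add, pow_add, pow_mul, pow_mul, neg_one_sq, one_pow, one_pow, h]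

lemma sum_pm (T U : Finset ι) :
    ∑ X ∈ U.powerset.filter (fun X => T ⊆ X), (-1 : F) ^ (X.card + T.card)
      = if T = U then 1 else 0 := by
  by_cases hTU : T ⊆ U
  · rw [Finset.sum_nbij' (i := fun X => X \ T) (j := fun V => T ∪ V)
      (t := (U \ T).powerset) (g := fun V => (-1 : F) ^ V.card)]
    · rw [parity_sum]
      congr 1
      simp only [eq_iff_iff]
      constructor
      · intro h; exact subset_antisymm hTU (by rwa [← sdiff_eq_empty_iff_subset])
      · intro h; rw [h]; simp
    · intro X hX
      simp only [mem_filter, mem_powerset] at hX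
      simp only [mem_powerset]
      exact sdiff_subset_sdiff hX.1 (Finset.Subset.refl T)
    · intro V hV
      simp only [mem_powerset] at hV
      simp only [mem_filter, mem_powerset]
      exact ⟨union_subset hTU (hV.trans sdiff_subset), subset_union_left⟩
    · intro X hX
      simp only [mem_filter, mem_powerset] at hX
      exact union_sdiff_of_subset hX.2
    · intro V hV
      simp only [mem_powerset] at hV
      rw [union_sdiff_cancel_left]
      rw [disjoint_iff_inter_eq_empty, inter_comm, ← disjoint_iff_inter_eq_empty]
      exact disjoint_of_subset_left hV sdiff_disjoint
    · intro X hX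
      simp only [mem_filter, mem_powerset] at hX
      have hc : (X \ T).card = X.card - T.card := card_sdiff_of_subset hX.2
      have hle := card_le_card hX.2
      exact np _ _ (by omega)
  · rw [if_neg (fun h => hTU (by rw [h]))]
    rw [Finset.sum_eq_zero]
    intro X hX
    simp only [mem_filter, mem_powerset] at hX
    exact absurd (hX.2.trans hX.1) hTU

lemma sum_pm' (T U : Finset ι) :
    ∑ X ∈ U.powerset.filter (fun X => T ⊆ X), (-1 : F) ^ (U.card + X.card)
      = if T = U then 1 else 0 := by
  have key : ∀ X ∈ U.powerset.filter (fun X => T ⊆ X),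
      (-1 : F) ^ (U.card + X.card) = (-1) ^ (U.card + T.card) * (-1) ^ (X.card + T.card) := by
    intro X hX
    rw [← pow_add]
    exact np _ _ (by omega)
  rw [Finset.sum_congr rfl key, ← mul_sum, sum_pm]
  by_cases h : T = U
  · subst h
    rw [if_pos rfl, mul_one]
    exact np _ _ (by omega) |>.trans (pow_zero _)
  · rw [if_neg h, mul_zero]


open Finset

variable {ι : Type*} [Fintype ι] [DecidableEq ι] {F : Type*} [Field F]

set_option linter.unusedSectionVars false

lemma bpt_support (x : ι → Bool) : bpt (univ.filter (fun i => x i = true)) = x := by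
  funext i
  simp [bpt]

lemma chi_eq_ite (S : Finset ι) (x : ι → Bool) :
    chi F S x = if S ⊆ univ.filter (fun i => x i = true) then 1 else 0 := by
  rw [← chi_bpt, bpt_support]

lemma repr_eq (f : (ι → Bool) → F) (x : ι → Bool) :
    f x = ∑ S : Finset ι, coefF F f S * chi F S x := by
  set U := univ.filter (fun i => x i = true) with hU
  have h1 : ∑ S : Finset ι, coefF F f S * chi F S x = ∑ S ∈ U.powerset, coefF F f S := by
    rw [Finset.sum_congr rfl (fun S _ => by
      rw [chi_eq_ite, ← hU, mul_ite, mul_one, mul_zero])]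
    simp only [← Finset.mem_powerset]
    rw [Finset.sum_ite_mem, univ_inter]
  rw [h1]
  unfold coefF
  rw [Finset.sum_comm' (t' := U.powerset) (s' := fun W => U.powerset.filter (fun S => W ⊆ S))
    (by intro S W; simp only [mem_filter, mem_powerset]; tauto)]
  have h2 : ∀ W ∈ U.powerset,
      ∑ S ∈ U.powerset.filter (fun S => W ⊆ S), (-1 : F) ^ (S.card + W.card) * f (bpt W)
        = (if W = U then 1 else 0) * f (bpt W) := by
    intro W _
    rw [← Finset.sum_mul, sum_pm]
  rw [Finset.sum_congr rfl h2]
  have h3 : ∑ W ∈ U.powerset, (if W = U then 1 else 0) * f (bpt W)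
      = ∑ W ∈ U.powerset, (if W = U then f (bpt W) else 0) := by
    apply Finset.sum_congr rfl; intro W _; split <;> simp
  rw [h3, Finset.sum_ite_eq' U.powerset U (fun W => f (bpt W)),
    if_pos (mem_powerset.2 (Finset.Subset.refl U)), bpt_support]

lemma coef_sum (β : Finset ι → F) (S : Finset ι) :
    coefF F (fun x => ∑ T : Finset ι, β T * chi F T x) S = β S := by
  unfold coefF
  have h1 : ∀ W ∈ S.powerset,
      (-1 : F) ^ (S.card + W.card) * ∑ T : Finset ι, β T * chi F T (bpt W)
        = ∑ T : Finset ι, β T * ((-1 : F) ^ (S.card + W.card) * (if T ⊆ W then 1 else 0)) := by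
    intro W _
    rw [Finset.mul_sum]
    apply Finset.sum_congr rfl
    intro T _
    rw [chi_bpt]
    ring
  rw [Finset.sum_congr rfl h1, Finset.sum_comm]
  have h2 : ∀ T : Finset ι,
      ∑ W ∈ S.powerset, β T * ((-1 : F) ^ (S.card + W.card) * (if T ⊆ W then 1 else 0))
        = β T * (if T = S then 1 else 0) := by
    intro T
    rw [← Finset.mul_sum]
    congr 1
    rw [← sum_pm' T S]
    rw [Finset.sum_filter]
    apply Finset.sum_congr rfl
    intro W _
    split <;> simp
  rw [Finset.sum_congr rfl (fun T _ => h2 T)]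
  have h3 : ∀ T : Finset ι, β T * (if T = S then 1 else 0) = if T = S then β T else 0 := by
    intro T; split <;> simp
  rw [Finset.sum_congr rfl (fun T _ => h3 T), Finset.sum_ite_eq' univ S β, if_pos (mem_univ S)]

lemma coef_zero_of_isPolyDeg {d : ℕ} {f : (ι → Bool) → F} (hf : IsPolyDeg d f)
    {S : Finset ι} (hS : d < S.card) : coefF F f S = 0 := by
  obtain ⟨α, hα, hrep⟩ := hf
  have : f = fun x => ∑ T : Finset ι, α T * chi F T x := by
    funext x; exact hrep x
  rw [this, coef_sum]
  exact hα S hS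


open Finset

variable {ι : Type*} [Fintype ι] [DecidableEq ι] {F : Type*} [Field F]

set_option linter.unusedSectionVars false

lemma bpt_insert (a : ι) (W : Finset ι) (ha : a ∉ W) :
    bpt (insert a W) = Function.update (bpt W) a true := by
  funext i
  by_cases h : i = a
  · subst h; simp [bpt]
  · simp [bpt, h, Function.update_of_ne h]

lemma bpt_mem_false {a : ι} {W : Finset ι} (ha : a ∉ W) : bpt W a = false := by
  simp [bpt, ha]

lemma coef_indep (f : (ι → Bool) → F) (c : ι)
    (h : ∀ x b, f (Function.update x c b) = f x) {S : Finset ι} (hc : c ∈ S) :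
    coefF F f S = 0 := by
  unfold coefF
  have hS : S = insert c (S.erase c) := (insert_erase hc).symm
  rw [hS, sum_powerset_insert (notMem_erase c S)]
  have key : ∀ W ∈ (S.erase c).powerset,
      (-1 : F) ^ ((insert c (S.erase c)).card + (insert c W).card) * f (bpt (insert c W))
        = -((-1 : F) ^ ((insert c (S.erase c)).card + W.card) * f (bpt W)) := by
    intro W hW
    have hcW : c ∉ W := fun hmem => (notMem_erase c S) (mem_powerset.1 hW hmem)
    rw [bpt_insert c W hcW]
    have : f (Function.update (bpt W) c true) = f (bpt W) := by
      conv_rhs => rw [← h (bpt W) true]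
    rw [this, card_insert_of_notMem hcW]
    have hpow : (-1 : F) ^ (#(insert c (S.erase c)) + (#W + 1))
        = -(-1 : F) ^ (#(insert c (S.erase c)) + #W) := by
      have e : #(insert c (S.erase c)) + (#W + 1) = (#(insert c (S.erase c)) + #W) + 1 := by
        omega
      rw [e, pow_succ]
      ring
    rw [hpow]
    ring
  rw [Finset.sum_congr rfl key, ← Finset.sum_add_distrib]
  simp

lemma bpt_update_false {c : ι} {W : Finset ι} (hc : c ∉ W) :
    Function.update (bpt W) c false = bpt W := by
  funext i
  by_cases h : i = c
  · subst h; simp [bpt, hc]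
  · rw [Function.update_of_ne h]

lemma bpt_mem_true {c : ι} {V : Finset ι} (hc : c ∈ V) : bpt V c = true := by
  simp [bpt, hc]

lemma coef_subst (g : (ι → Bool) → F) (a b : ι) (hab : a ≠ b) (S : Finset ι)
    (ha : a ∉ S) (hb : b ∉ S) :
    coefF F (fun x => g (Function.update x b (x a))) (insert a S)
      = coefF F g (insert a S) + coefF F g (insert b S)
        + coefF F g (insert a (insert b S)) := by
  have haInsb : a ∉ insert b S := by simp [hab, ha]
  have hL : coefF F (fun x => g (Function.update x b (x a))) (insert a S)
      = ∑ W ∈ S.powerset, (-1 : F) ^ (S.card + W.card)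
          * (- g (bpt W) + g (bpt (insert a (insert b W)))) := by
    unfold coefF
    rw [sum_powerset_insert ha, ← Finset.sum_add_distrib]
    apply Finset.sum_congr rfl
    intro W hW
    have hWS : W ⊆ S := mem_powerset.1 hW
    have haW : a ∉ W := fun h => ha (hWS h)
    have hbW : b ∉ W := fun h => hb (hWS h)
    have hbaW : b ∉ insert a W := by simp [Ne.symm hab, hbW]
    have h1 : g (Function.update (bpt W) b (bpt W a)) = g (bpt W) := by
      rw [bpt_mem_false haW, bpt_update_false hbW]
    have h2 : g (Function.update (bpt (insert a W)) b (bpt (insert a W) a))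
        = g (bpt (insert a (insert b W))) := by
      rw [bpt_mem_true (mem_insert_self a W), ← bpt_insert b (insert a W) hbaW,
        Finset.insert_comm]
    simp only []
    rw [h1, h2, card_insert_of_notMem ha, card_insert_of_notMem haW]
    have e1 : (-1 : F) ^ (S.card + 1 + W.card) = -(-1 : F) ^ (S.card + W.card) := by
      rw [np (S.card + 1 + W.card) (S.card + W.card + 1) (by omega), pow_succ]
      ring
    have e2 : (-1 : F) ^ (S.card + 1 + (W.card + 1)) = (-1 : F) ^ (S.card + W.card) :=
      np _ _ (by omega)
    rw [e1, e2]
    ring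
  have hA : coefF F g (insert a S)
      = ∑ W ∈ S.powerset, (-1 : F) ^ (S.card + W.card)
          * (- g (bpt W) + g (bpt (insert a W))) := by
    unfold coefF
    rw [sum_powerset_insert ha, ← Finset.sum_add_distrib]
    apply Finset.sum_congr rfl
    intro W hW
    have haW : a ∉ W := fun h => ha (mem_powerset.1 hW h)
    rw [card_insert_of_notMem ha, card_insert_of_notMem haW]
    have e1 : (-1 : F) ^ (S.card + 1 + W.card) = -(-1 : F) ^ (S.card + W.card) := by
      rw [np (S.card + 1 + W.card) (S.card + W.card + 1) (by omega), pow_succ]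
      ring
    have e2 : (-1 : F) ^ (S.card + 1 + (W.card + 1)) = (-1 : F) ^ (S.card + W.card) :=
      np _ _ (by omega)
    rw [e1, e2]
    ring
  have hB : coefF F g (insert b S)
      = ∑ W ∈ S.powerset, (-1 : F) ^ (S.card + W.card)
          * (- g (bpt W) + g (bpt (insert b W))) := by
    unfold coefF
    rw [sum_powerset_insert hb, ← Finset.sum_add_distrib]
    apply Finset.sum_congr rfl
    intro W hW
    have hbW : b ∉ W := fun h => hb (mem_powerset.1 hW h)
    rw [card_insert_of_notMem hb, card_insert_of_notMem hbW]
    have e1 : (-1 : F) ^ (S.card + 1 + W.card) = -(-1 : F) ^ (S.card + W.card) := by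
      rw [np (S.card + 1 + W.card) (S.card + W.card + 1) (by omega), pow_succ]
      ring
    have e2 : (-1 : F) ^ (S.card + 1 + (W.card + 1)) = (-1 : F) ^ (S.card + W.card) :=
      np _ _ (by omega)
    rw [e1, e2]
    ring
  have hC : coefF F g (insert a (insert b S))
      = ∑ W ∈ S.powerset, (-1 : F) ^ (S.card + W.card)
          * (g (bpt W) - g (bpt (insert a W)) - g (bpt (insert b W))
              + g (bpt (insert a (insert b W)))) := by
    unfold coefF
    rw [sum_powerset_insert haInsb, sum_powerset_insert hb, sum_powerset_insert hb,
      ← Finset.sum_add_distrib, ← Finset.sum_add_distrib, ← Finset.sum_add_distrib]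
    apply Finset.sum_congr rfl
    intro W hW
    have hWS : W ⊆ S := mem_powerset.1 hW
    have haW : a ∉ W := fun h => ha (hWS h)
    have hbW : b ∉ W := fun h => hb (hWS h)
    have haBW : a ∉ insert b W := by simp [hab, haW]
    rw [card_insert_of_notMem haInsb, card_insert_of_notMem hb,
      card_insert_of_notMem haW, card_insert_of_notMem hbW,
      card_insert_of_notMem haBW, card_insert_of_notMem hbW]
    have e1 : (-1 : F) ^ (S.card + 1 + 1 + W.card) = (-1 : F) ^ (S.card + W.card) :=
      np _ _ (by omega)
    have e2 : (-1 : F) ^ (S.card + 1 + 1 + (W.card + 1)) = -(-1 : F) ^ (S.card + W.card) := by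
      rw [np (S.card + 1 + 1 + (W.card + 1)) (S.card + W.card + 1) (by omega), pow_succ]
      ring
    have e3 : (-1 : F) ^ (S.card + 1 + 1 + (W.card + 1 + 1)) = (-1 : F) ^ (S.card + W.card) :=
      np _ _ (by omega)
    rw [e1, e2, e3]
    ring
  rw [hL, hA, hB, hC, ← Finset.sum_add_distrib, ← Finset.sum_add_distrib]
  apply Finset.sum_congr rfl
  intro W hW
  ring


open Finset

section Glue

variable (F : Type*) [Field F] (d ℓ r : ℕ) (hr : ℓ + 2 ≤ r)
  (P : Fin (ℓ + 1) → ((Fin r → Bool) → F))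

noncomputable def pickT (S : Finset (Fin r)) : Fin (ℓ + 1) :=
  if h : ∃ t : Fin (ℓ + 1), memIdx ℓ r hr t ∉ S then h.choose else ⟨0, Nat.succ_pos ℓ⟩

noncomputable def betaC (S : Finset (Fin r)) : F :=
  if h : ∃ t : Fin (ℓ + 1), memIdx ℓ r hr t ∉ S then coefF F (P h.choose) S else 0

noncomputable def deltaC (t : Fin (ℓ + 1)) (S : Finset (Fin r)) : F :=
  coefF F (P t) (insert (memIdx ℓ r hr t) S)
    - betaC F ℓ r hr P (insert (memIdx ℓ r hr t) S)

noncomputable def gammaAux : ℕ → Finset (Fin r) → F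
  | 0, _ => 0
  | n + 1, S => deltaC F ℓ r hr P (pickT ℓ r hr S) S
      - gammaAux n (insert (memIdx ℓ r hr (pickT ℓ r hr S)) S)

noncomputable def gammaC (S : Finset (Fin r)) : F :=
  gammaAux F ℓ r hr P (d - S.card) S

variable {F d ℓ r P}
variable {hr}

lemma memIdx_inj : Function.Injective (memIdx ℓ r hr) := by
  intro t u h
  have := congrArg Fin.val h
  exact Fin.ext this

lemma memIdx_ne_ctr (t : Fin (ℓ + 1)) : memIdx ℓ r hr t ≠ ctrIdx ℓ r hr := by
  intro h
  have := congrArg Fin.val h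
  have ht := t.isLt
  simp only [memIdx, ctrIdx] at this
  omega

lemma exists_not_mem {S : Finset (Fin r)} (hS : S.card ≤ ℓ) :
    ∃ t : Fin (ℓ + 1), memIdx ℓ r hr t ∉ S := by
  by_contra hcon
  push_neg at hcon
  have hsub : (univ : Finset (Fin (ℓ + 1))).image (memIdx ℓ r hr) ⊆ S := by
    intro i hi
    obtain ⟨t, _, rfl⟩ := mem_image.1 hi
    exact hcon t
  have hcard := card_le_card hsub
  rw [card_image_of_injective _ (memIdx_inj (hr := hr)), card_univ, Fintype.card_fin] at hcard
  omega

variable (hcompat : ∀ i j : Fin (ℓ + 1), i < j →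
    subst (memIdx ℓ r hr j) (memIdx ℓ r hr i) (P i)
      = subst (memIdx ℓ r hr j) (memIdx ℓ r hr i) (P j))

section WithCompat

include hcompat

lemma coef_consist {t u : Fin (ℓ + 1)} {S : Finset (Fin r)}
    (ht : memIdx ℓ r hr t ∉ S) (hu : memIdx ℓ r hr u ∉ S) :
    coefF F (P t) S = coefF F (P u) S := by
  have core : ∀ t u : Fin (ℓ + 1), t < u → memIdx ℓ r hr t ∉ S → memIdx ℓ r hr u ∉ S →
      coefF F (P t) S = coefF F (P u) S := by
    intro t u htu ht hu
    unfold coefF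
    apply Finset.sum_congr rfl
    intro W hW
    have hWS := mem_powerset.1 hW
    have htW : memIdx ℓ r hr t ∉ W := fun hh => ht (hWS hh)
    have huW : memIdx ℓ r hr u ∉ W := fun hh => hu (hWS hh)
    have := congrFun (hcompat t u htu) (bpt W)
    unfold subst at this
    rw [bpt_mem_false htW, bpt_update_false huW] at this
    rw [this]
  rcases lt_trichotomy t u with h | h | h
  · exact core t u h ht hu
  · rw [h]
  · exact (core u t h hu ht).symm

lemma beta_spec {S : Finset (Fin r)} (t : Fin (ℓ + 1)) (ht : memIdx ℓ r hr t ∉ S) :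
    betaC F ℓ r hr P S = coefF F (P t) S := by
  have hEx : ∃ u : Fin (ℓ + 1), memIdx ℓ r hr u ∉ S := ⟨t, ht⟩
  unfold betaC
  rw [dif_pos hEx]
  exact coef_consist hcompat hEx.choose_spec ht

end WithCompat

variable (hdeg : ∀ h, IsPolyDeg d (P h))

include hdeg

lemma betaC_zero {S : Finset (Fin r)} (hS : d < S.card) : betaC F ℓ r hr P S = 0 := by
  unfold betaC
  split
  · exact coef_zero_of_isPolyDeg (hdeg _) hS
  · rfl

lemma deltaC_zero {t : Fin (ℓ + 1)} {S : Finset (Fin r)} (ht : memIdx ℓ r hr t ∉ S)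
    (hS : d ≤ S.card) : deltaC F ℓ r hr P t S = 0 := by
  unfold deltaC
  have hcard : d < (insert (memIdx ℓ r hr t) S).card := by
    rw [card_insert_of_notMem ht]; omega
  rw [coef_zero_of_isPolyDeg (hdeg _) hcard, betaC_zero hdeg hcard]
  ring

omit hdeg

lemma gammaC_zero {S : Finset (Fin r)} (hS : d ≤ S.card) : gammaC F d ℓ r hr P S = 0 := by
  unfold gammaC
  rw [Nat.sub_eq_zero_of_le hS]
  rfl

lemma pickT_spec {S : Finset (Fin r)} (hS : S.card ≤ ℓ) :
    memIdx ℓ r hr (pickT ℓ r hr S) ∉ S := by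
  have hEx : ∃ t : Fin (ℓ + 1), memIdx ℓ r hr t ∉ S := exists_not_mem hS
  unfold pickT
  rw [dif_pos hEx]
  exact hEx.choose_spec

section Main

include hcompat

lemma keyid {t u : Fin (ℓ + 1)} (htu : t ≠ u) {S : Finset (Fin r)}
    (ht : memIdx ℓ r hr t ∉ S) (hu : memIdx ℓ r hr u ∉ S) :
    coefF F (P t) (insert (memIdx ℓ r hr t) S) + coefF F (P t) (insert (memIdx ℓ r hr u) S)
        + coefF F (P t) (insert (memIdx ℓ r hr t) (insert (memIdx ℓ r hr u) S))
      = coefF F (P u) (insert (memIdx ℓ r hr t) S) + coefF F (P u) (insert (memIdx ℓ r hr u) S)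
        + coefF F (P u) (insert (memIdx ℓ r hr t) (insert (memIdx ℓ r hr u) S)) := by
  have core : ∀ t u : Fin (ℓ + 1), t < u → memIdx ℓ r hr t ∉ S → memIdx ℓ r hr u ∉ S →
      coefF F (P t) (insert (memIdx ℓ r hr t) S) + coefF F (P t) (insert (memIdx ℓ r hr u) S)
          + coefF F (P t) (insert (memIdx ℓ r hr t) (insert (memIdx ℓ r hr u) S))
        = coefF F (P u) (insert (memIdx ℓ r hr t) S) + coefF F (P u) (insert (memIdx ℓ r hr u) S)
          + coefF F (P u) (insert (memIdx ℓ r hr t) (insert (memIdx ℓ r hr u) S)) := by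
    intro t u htu ht hu
    have hne : memIdx ℓ r hr t ≠ memIdx ℓ r hr u := fun h => (ne_of_lt htu) (memIdx_inj h)
    have hfun : (fun x => P t (Function.update x (memIdx ℓ r hr u) (x (memIdx ℓ r hr t))))
        = (fun x => P u (Function.update x (memIdx ℓ r hr u) (x (memIdx ℓ r hr t)))) :=
      hcompat t u htu
    have e1 := coef_subst (P t) (memIdx ℓ r hr t) (memIdx ℓ r hr u) hne S ht hu
    have e2 := coef_subst (P u) (memIdx ℓ r hr t) (memIdx ℓ r hr u) hne S ht hu
    rw [hfun] at e1
    linear_combination e2 - e1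
  rcases lt_trichotomy t u with h | h | h
  · exact core t u h ht hu
  · rw [h]
  · have h2 := core u t h hu ht
    rw [Finset.insert_comm] at h2
    linear_combination -h2
  
lemma cocycle {t u : Fin (ℓ + 1)} (htu : t ≠ u) {S : Finset (Fin r)}
    (ht : memIdx ℓ r hr t ∉ S) (hu : memIdx ℓ r hr u ∉ S) :
    deltaC F ℓ r hr P t S + deltaC F ℓ r hr P t (insert (memIdx ℓ r hr u) S)
      = deltaC F ℓ r hr P u S + deltaC F ℓ r hr P u (insert (memIdx ℓ r hr t) S) := by
  have hne : memIdx ℓ r hr t ≠ memIdx ℓ r hr u := fun h => htu (memIdx_inj h)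
  have htu2 : memIdx ℓ r hr t ∉ insert (memIdx ℓ r hr u) S := by
    simp [hne, ht]
  have hut2 : memIdx ℓ r hr u ∉ insert (memIdx ℓ r hr t) S := by
    simp [Ne.symm hne, hu]
  unfold deltaC
  rw [beta_spec hcompat u hut2, beta_spec hcompat t htu2]
  rw [show insert (memIdx ℓ r hr u) (insert (memIdx ℓ r hr t) S)
      = insert (memIdx ℓ r hr t) (insert (memIdx ℓ r hr u) S) from Finset.insert_comm _ _ _]
  have hk := keyid hcompat htu ht hu
  linear_combination hk

lemma E2aux (hdeg : ∀ h, IsPolyDeg d (P h)) (hdl : d ≤ ℓ) : ∀ n : ℕ, ∀ S : Finset (Fin r), d - S.card ≤ n →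
    ∀ t : Fin (ℓ + 1), memIdx ℓ r hr t ∉ S →
    gammaC F d ℓ r hr P S + gammaC F d ℓ r hr P (insert (memIdx ℓ r hr t) S)
      = deltaC F ℓ r hr P t S := by
  intro n
  induction n with
  | zero =>
    intro S hn t ht
    have hdS : d ≤ S.card := by omega
    rw [gammaC_zero hdS, gammaC_zero (le_trans hdS (card_le_card (subset_insert _ _))),
      deltaC_zero hdeg ht hdS]
    ring
  | succ n ih =>
    intro S hn t ht
    by_cases hcard : d ≤ S.card
    · rw [gammaC_zero hcard, gammaC_zero (le_trans hcard (card_le_card (subset_insert _ _))),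
        deltaC_zero hdeg ht hcard]
      ring
    · push_neg at hcard
      have hSl : S.card ≤ ℓ := by omega
      set t0 := pickT ℓ r hr S with ht0def
      have ht0 : memIdx ℓ r hr t0 ∉ S := pickT_spec hSl
      have hg : gammaC F d ℓ r hr P S
          = deltaC F ℓ r hr P t0 S - gammaC F d ℓ r hr P (insert (memIdx ℓ r hr t0) S) := by
        unfold gammaC
        have h1 : d - S.card = (d - (insert (memIdx ℓ r hr t0) S).card) + 1 := by
          rw [card_insert_of_notMem ht0]; omega
        rw [h1]
        rfl
      by_cases htt : t = t0
      · rw [htt, hg]; ring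
      · have hne : memIdx ℓ r hr t ≠ memIdx ℓ r hr t0 := fun h => htt (memIdx_inj h)
        have htm : memIdx ℓ r hr t ∉ insert (memIdx ℓ r hr t0) S := by simp [hne, ht]
        have ht0m : memIdx ℓ r hr t0 ∉ insert (memIdx ℓ r hr t) S := by simp [Ne.symm hne, ht0]
        have hc1 : d - (insert (memIdx ℓ r hr t0) S).card ≤ n := by
          rw [card_insert_of_notMem ht0]; omega
        have hc2 : d - (insert (memIdx ℓ r hr t) S).card ≤ n := by
          rw [card_insert_of_notMem ht]; omega
        have IH1 := ih (insert (memIdx ℓ r hr t0) S) hc1 t htm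
        have IH2 := ih (insert (memIdx ℓ r hr t) S) hc2 t0 ht0m
        rw [show insert (memIdx ℓ r hr t0) (insert (memIdx ℓ r hr t) S)
            = insert (memIdx ℓ r hr t) (insert (memIdx ℓ r hr t0) S)
          from Finset.insert_comm _ _ _] at IH2
        have C := cocycle hcompat htt ht ht0
        rw [hg]
        linear_combination IH2 - IH1 - C

lemma E2 (hdeg : ∀ h, IsPolyDeg d (P h)) (hdl : d ≤ ℓ) (S : Finset (Fin r)) (t : Fin (ℓ + 1))
    (ht : memIdx ℓ r hr t ∉ S) :
    gammaC F d ℓ r hr P S + gammaC F d ℓ r hr P (insert (memIdx ℓ r hr t) S)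
      = deltaC F ℓ r hr P t S :=
  E2aux hcompat hdeg hdl d S (Nat.sub_le d S.card) t ht

end Main

end Glue


section Aux2
variable {ι : Type*} [Fintype ι] [DecidableEq ι] {F : Type*} [Field F]
set_option maxHeartbeats 1000000
lemma chi_insert_mul (a : ι) (S : Finset ι) (x : ι → Bool) :
    (if x a then (1 : F) else 0) * chi F S x = chi F (insert a S) x := by
  by_cases h : a ∈ S
  · rw [insert_eq_self.2 h]
    by_cases hxa : x a
    · simp [hxa]
    · rw [if_neg hxa, zero_mul]
      exact (prod_eq_zero h (by rw [if_neg hxa])).symm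
  · rw [chi, chi, prod_insert h]


end Aux2
end Aux

open Finset

set_option maxHeartbeats 1000000 in
/-- Gluing, star case. Let `ℓ ≥ d`, `r ≥ ℓ+2`, `I = [r]`, with the `ℓ+1`
pairs `{h, r}` (`h ∈ [ℓ+1]`) sharing the center variable `X_r`. Suppose each `P⁽ʰ⁾` is a
degree-`d` multilinear polynomial on `{0,1}^{[r−1]}` (encoded on the full cube, not depending
on coordinate `r`), and for all `i < j` in `[ℓ+1]`: `P⁽ⁱ⁾[j:=i] = P⁽ʲ⁾[j:=i]`. Then there is
a degree-`d` multilinear `P` on `{0,1}^{[r]}` with `P|_h = P⁽ʰ⁾` (substituting `X_r := X_h`)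
for every `h ∈ [ℓ+1]`. -/
theorem stmt17 (F : Type*) [Field F] (d ℓ r : ℕ) (hdl : d ≤ ℓ) (hr : ℓ + 2 ≤ r)
    (P : Fin (ℓ + 1) → ((Fin r → Bool) → F))
    (hdeg : ∀ h, IsPolyDeg d (P h))
    (hindep : ∀ h, ∀ x : Fin r → Bool, ∀ b : Bool,
      P h (Function.update x (ctrIdx ℓ r hr) b) = P h x)
    (hcompat : ∀ i j : Fin (ℓ + 1), i < j →
      subst (memIdx ℓ r hr j) (memIdx ℓ r hr i) (P i)
        = subst (memIdx ℓ r hr j) (memIdx ℓ r hr i) (P j)) :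
    ∃ Q : (Fin r → Bool) → F, IsPolyDeg d Q ∧
      ∀ h, subst (ctrIdx ℓ r hr) (memIdx ℓ r hr h) Q = P h := by
  set c := ctrIdx ℓ r hr with hc
  set β' : Finset (Fin r) → F := fun S =>
    if c ∈ S then gammaC F d ℓ r hr P (S.erase c) else betaC F ℓ r hr P S with hβ'
  refine ⟨fun x => ∑ S : Finset (Fin r), β' S * chi F S x, ?_, ?_⟩
  · refine ⟨β', ?_, fun x => rfl⟩
    intro S hS
    rw [hβ']
    simp only []
    split
    · rename_i hcS
      apply gammaC_zero
      have := card_erase_of_mem hcS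
      omega
    · exact betaC_zero hdeg hS
  · intro h
    funext x
    unfold subst
    set a := memIdx ℓ r hr h with ha
    have hac : a ≠ c := memIdx_ne_ctr h
    set y := Function.update x c (x a) with hy
    -- basic pointwise facts
    have hchiy : ∀ S : Finset (Fin r), c ∉ S → chi F S y = chi F S x := by
      intro S hcS
      apply prod_congr rfl
      intro i hi
      have : i ≠ c := fun hh => hcS (by rwa [hh] at hi)
      rw [hy, Function.update_of_ne this]
    have hca : c ≠ a := Ne.symm hac
    set A := univ.filter (fun S : Finset (Fin r) => ¬ c ∈ S ∧ a ∈ S) with hAdef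
    set B := univ.filter (fun S : Finset (Fin r) => ¬ c ∈ S ∧ ¬ a ∈ S) with hBdef
    show ∑ S : Finset (Fin r), β' S * chi F S y = P h x
    -- the sum over sets containing c
    have h1 : ∑ S ∈ univ.filter (fun S : Finset (Fin r) => c ∈ S), β' S * chi F S y
        = ∑ S ∈ univ.filter (fun S : Finset (Fin r) => ¬ c ∈ S),
            gammaC F d ℓ r hr P S * chi F (insert a S) x := by
      apply Finset.sum_nbij' (i := fun S => S.erase c) (j := fun S => insert c S)
      · intro S hS
        simp only [mem_filter, mem_univ, true_and] at hS ⊢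
        exact notMem_erase c S
      · intro S hS
        simp only [mem_filter, mem_univ, true_and] at hS ⊢
        exact mem_insert_self c S
      · intro S hS
        simp only [mem_filter, mem_univ, true_and] at hS
        exact insert_erase hS
      · intro S hS
        simp only [mem_filter, mem_univ, true_and] at hS
        exact erase_insert hS
      · intro S hS
        simp only [mem_filter, mem_univ, true_and] at hS
        rw [hβ']
        simp only [if_pos hS]
        congr 1
        have hcS' : c ∉ S.erase c := notMem_erase c S
        conv_lhs => rw [← insert_erase hS]
        rw [chi, prod_insert hcS', ← chi]
        rw [hy, Function.update_self, ← hy, hchiy _ hcS', chi_insert_mul]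
    -- split the γ-sum by membership of a
    have h2 : ∑ S ∈ univ.filter (fun S : Finset (Fin r) => ¬ c ∈ S),
          gammaC F d ℓ r hr P S * chi F (insert a S) x
        = ∑ S ∈ A, gammaC F d ℓ r hr P S * chi F S x
          + ∑ S ∈ A, gammaC F d ℓ r hr P (S.erase a) * chi F S x := by
      rw [← Finset.sum_filter_add_sum_filter_not
        (univ.filter (fun S : Finset (Fin r) => ¬ c ∈ S)) (fun S => a ∈ S), filter_filter,
        filter_filter]
      congr 1
      · apply Finset.sum_congr
        · rw [hAdef]
        · intro S hS
          rw [hAdef] at hS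
          simp only [mem_filter, mem_univ, true_and] at hS
          rw [insert_eq_self.2 hS.2]
      · apply Finset.sum_nbij' (i := fun S => insert a S) (j := fun S => S.erase a)
        · intro S hS
          simp only [mem_filter, mem_univ, true_and] at hS
          rw [hAdef]
          simp only [mem_filter, mem_univ, true_and]
          constructor
          · simp only [mem_insert]
            push_neg
            exact ⟨hca, hS.1⟩
          · exact mem_insert_self a S
        · intro S hS
          rw [hAdef] at hS
          simp only [mem_filter, mem_univ, true_and] at hS ⊢
          constructor
          · exact fun hmem => hS.1 (mem_of_mem_erase hmem)
          · exact notMem_erase a S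
        · intro S hS
          simp only [mem_filter, mem_univ, true_and] at hS
          exact erase_insert hS.2
        · intro S hS
          rw [hAdef] at hS
          simp only [mem_filter, mem_univ, true_and] at hS
          exact insert_erase hS.2
        · intro S hS
          simp only [mem_filter, mem_univ, true_and] at hS
          rw [erase_insert hS.2]
    -- the sum over sets not containing c
    have h3 : ∑ S ∈ univ.filter (fun S : Finset (Fin r) => ¬ c ∈ S), β' S * chi F S y
        = ∑ S ∈ A, betaC F ℓ r hr P S * chi F S x
          + ∑ S ∈ B, betaC F ℓ r hr P S * chi F S x := by
      rw [← Finset.sum_filter_add_sum_filter_not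
        (univ.filter (fun S : Finset (Fin r) => ¬ c ∈ S)) (fun S => a ∈ S), filter_filter,
        filter_filter]
      congr 1
      · apply Finset.sum_congr
        · rw [hAdef]
        · intro S hS
          rw [hAdef] at hS
          simp only [mem_filter, mem_univ, true_and] at hS
          rw [hβ']
          simp only [if_neg hS.1]
          rw [hchiy _ hS.1]
      · apply Finset.sum_congr
        · rw [hBdef]
        · intro S hS
          rw [hBdef] at hS
          simp only [mem_filter, mem_univ, true_and] at hS
          rw [hβ']
          simp only [if_neg hS.1]
          rw [hchiy _ hS.1]
    -- representation of P h
    have h4 : P h x = ∑ S ∈ A, coefF F (P h) S * chi F S x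
        + ∑ S ∈ B, coefF F (P h) S * chi F S x := by
      rw [repr_eq (P h) x,
        ← Finset.sum_filter_add_sum_filter_not univ (fun S : Finset (Fin r) => c ∈ S)]
      have hz : ∑ S ∈ univ.filter (fun S : Finset (Fin r) => c ∈ S),
          coefF F (P h) S * chi F S x = 0 := by
        apply Finset.sum_eq_zero
        intro S hS
        simp only [mem_filter, mem_univ, true_and] at hS
        rw [coef_indep (P h) c (fun z b => hindep h z b) hS, zero_mul]
      rw [hz, zero_add,
        ← Finset.sum_filter_add_sum_filter_not
          (univ.filter (fun S : Finset (Fin r) => ¬ c ∈ S)) (fun S => a ∈ S), filter_filter,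
        filter_filter]
    -- put everything together
    rw [← Finset.sum_filter_add_sum_filter_not univ (fun S : Finset (Fin r) => c ∈ S)
      (fun S => β' S * chi F S y), h1, h2, h3, h4]
    have h5 : ∑ S ∈ A, gammaC F d ℓ r hr P S * chi F S x
        + ∑ S ∈ A, gammaC F d ℓ r hr P (S.erase a) * chi F S x
        + ∑ S ∈ A, betaC F ℓ r hr P S * chi F S x
        = ∑ S ∈ A, coefF F (P h) S * chi F S x := by
      rw [← Finset.sum_add_distrib, ← Finset.sum_add_distrib]
      apply Finset.sum_congr rfl
      intro S hS
      rw [hAdef] at hS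
      simp only [mem_filter, mem_univ, true_and] at hS
      have haS : a ∉ S.erase a := notMem_erase a S
      have e := E2 hcompat hdeg hdl (S.erase a) h (by rw [← ha]; exact haS)
      rw [← ha] at e
      unfold deltaC at e
      rw [← ha, insert_erase hS.2] at e
      linear_combination (chi F S x) * e
    have h6 : ∑ S ∈ B, betaC F ℓ r hr P S * chi F S x
        = ∑ S ∈ B, coefF F (P h) S * chi F S x := by
      apply Finset.sum_congr rfl
      intro S hS
      rw [hBdef] at hS
      simp only [mem_filter, mem_univ, true_and] at hS
      rw [beta_spec hcompat h hS.2]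
    linear_combination h5 + h6
end
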